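/- arXiv:2209.07860 — 5 statements merged into one kernel-verified Lean document; each statement's English description precedes it below -/
import Mathlib

section
/- Let (G, L, c, r, e_r) be a rooted WRAP instance, F⃗ a non-shortenable directed WRAP solution, and S ⊆ L a nonempty link set such that the induced link intersection graph H[S] is connected. Let V(S) denote the set of vertices incident to a link of S. Then Drop_{F⃗}(S) = (⋃_{v ∈ V(S)} δ⁻_{F⃗}(v)) \ δ⁻_{F⃗}(lca(V(S))), where δ⁻_{F⃗}(v) is the set of directed links of F⃗ with head v and lca(V(S)) is the least common ancestor of V(S) in the arborescence (V, F⃗). -/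
/-!
Common definitions for the Weighted Ring Augmentation Problem (WRAP).

A rooted WRAP instance `(G, L, c, r, e_r)` has a ring graph `G` whose
vertices we identify with `Fin n`, numbered `r = 0, 1, …, n-1` in the order
in which they appear along the path `(V, E \ {e_r})` starting at the root
`r = 0`.  Vertex `i` is to the left of `j` iff `i < j`.
-/

/-- An undirected link: an unordered pair of distinct vertices of the ring,
recorded via its left endpoint `lo` and its right endpoint `hi`. -/
structure Link (n : ℕ) where
  lo : Fin n
  hi : Fin n
  lo_lt_hi : lo < hi

instance {n : ℕ} : DecidableEq (Link n) := fun a b =>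
  decidable_of_iff (a.lo = b.lo ∧ a.hi = b.hi) (by cases a; cases b; simp)

/-- A directed link: an ordered pair of distinct vertices. -/
structure DLink (n : ℕ) where
  tail : Fin n
  head : Fin n
  ne : tail ≠ head

instance {n : ℕ} : DecidableEq (DLink n) := fun a b =>
  decidable_of_iff (a.tail = b.tail ∧ a.head = b.head) (by cases a; cases b; simp)

variable {n : ℕ}

/-- The underlying undirected link of a directed link. -/
def DLink.toLink (d : DLink n) : Link n :=
  ⟨min d.tail d.head, max d.tail d.head, min_lt_max.mpr d.ne⟩

/-- `ℓ` is incident to `v`. -/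
def Link.Incident (ℓ : Link n) (v : Fin n) : Prop := ℓ.lo = v ∨ ℓ.hi = v

/-- The 2-cuts `C_G` of the ring: the nonempty intervals of consecutive
vertices along the path `(V, E \ {e_r})` that do not contain the root `0`. -/
def IsCut [NeZero n] (C : Finset (Fin n)) : Prop :=
  ∃ a b : Fin n, 0 < a ∧ a ≤ b ∧ C = Finset.Icc a b

/-- `ℓ` has exactly one endpoint in `C`. -/
def crossesCut (ℓ : Link n) (C : Finset (Fin n)) : Prop :=
  (ℓ.lo ∈ C ∧ ℓ.hi ∉ C) ∨ (ℓ.lo ∉ C ∧ ℓ.hi ∈ C)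

instance (ℓ : Link n) (C : Finset (Fin n)) : Decidable (crossesCut ℓ C) := by
  unfold crossesCut; infer_instance

/-- `δ_K(C)`: the links of `K` with exactly one endpoint in `C`. -/
def cutLinks (K : Finset (Link n)) (C : Finset (Fin n)) : Finset (Link n) :=
  K.filter (fun ℓ => crossesCut ℓ C)

/-- An (undirected) WRAP solution: every 2-cut is covered by some link. -/
def IsSolution [NeZero n] (S : Finset (Link n)) : Prop :=
  ∀ C : Finset (Fin n), IsCut C → (cutLinks S C).Nonempty

/-- A directed link covers a 2-cut if it enters it. -/
def DCovers (d : DLink n) (C : Finset (Fin n)) : Prop := d.tail ∉ C ∧ d.head ∈ C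

/-- A directed WRAP solution: every 2-cut is entered by some directed link. -/
def IsDirSolution [NeZero n] (F : Finset (DLink n)) : Prop :=
  ∀ C : Finset (Fin n), IsCut C → ∃ d ∈ F, DCovers d C

/-- `d'` is a shortening of `d`: same head, and the tail of `d'` lies on the
unique path between the endpoints of `d` in `(V, E \ {e_r})`. -/
def IsShortening (d' d : DLink n) : Prop :=
  d'.head = d.head ∧ min d.tail d.head ≤ d'.tail ∧ d'.tail ≤ max d.tail d.head

/-- A non-shortenable directed WRAP solution: deleting any link, or replacing
any link by a strict shortening of it, destroys feasibility. -/
def NonShortenable [NeZero n] (F : Finset (DLink n)) : Prop :=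
  IsDirSolution F ∧
    (∀ d ∈ F, ¬ IsDirSolution (F.erase d)) ∧
    (∀ d ∈ F, ∀ d' : DLink n, IsShortening d' d → d' ≠ d →
      ¬ IsDirSolution (insert d' (F.erase d)))

/-- `d` is a shadow of the undirected link `ℓ`: a shortening of one of the two
orientations of `ℓ`. -/
def IsShadow (d : DLink n) (ℓ : Link n) : Prop :=
  (d.head = ℓ.lo ∨ d.head = ℓ.hi) ∧ ℓ.lo ≤ d.tail ∧ d.tail ≤ ℓ.hi

/-- `u` is a descendant of `v` in `(V, F)` (every vertex is a descendant of
itself). -/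
def Descend (F : Finset (DLink n)) (v u : Fin n) : Prop :=
  Relation.ReflTransGen (fun a b => ∃ d ∈ F, d.tail = a ∧ d.head = b) v u

/-- `u` is `v`-good: not a descendant of `v` in `(V, F)`. -/
def VGood (F : Finset (DLink n)) (v u : Fin n) : Prop := ¬ Descend F v u

/-- `w` is the least common ancestor of the vertex set `U` in `(V, F)`. -/
def IsLCA (F : Finset (DLink n)) (w : Fin n) (U : Set (Fin n)) : Prop :=
  (∀ u ∈ U, Descend F w u) ∧ ∀ x : Fin n, (∀ u ∈ U, Descend F x u) → Descend F x w

/-- `d = (u,v)` is responsible for the 2-cut `C`: it covers `C` and no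
directed link of `F` on the `r`–`u` path in the arborescence `(V, F)`
(i.e. no link of `F` whose head is an ancestor of `u`) covers `C`. -/
def Responsible [NeZero n] (F : Finset (DLink n)) (d : DLink n)
    (C : Finset (Fin n)) : Prop :=
  IsCut C ∧ DCovers d C ∧
    ∀ d' ∈ F, Descend F d'.head d.tail → ¬ DCovers d' C

/-- `Drop_F(K)`: directed links of `F` all of whose responsible cuts
are covered by `K`. -/
def Drop [NeZero n] (F : Finset (DLink n)) (K : Finset (Link n)) : Set (DLink n) :=
  {d | d ∈ F ∧ ∀ C : Finset (Fin n), Responsible F d C → (cutLinks K C).Nonempty}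

/-- Two links are crossing: their endpoints interleave along the ring. -/
def Crossing (ℓ f : Link n) : Prop :=
  (ℓ.lo < f.lo ∧ f.lo < ℓ.hi ∧ ℓ.hi < f.hi) ∨
  (f.lo < ℓ.lo ∧ ℓ.lo < f.hi ∧ f.hi < ℓ.hi)

/-- Two links intersect: they share an endpoint or cross. -/
def Intersects (ℓ f : Link n) : Prop :=
  (ℓ.lo = f.lo ∨ ℓ.lo = f.hi ∨ ℓ.hi = f.lo ∨ ℓ.hi = f.hi) ∨ Crossing ℓ f

/-- The vertex `u` is connected to the vertex `w` in the link intersection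
graph `H[K]`: there is a path in `H[K]` from a link incident to `u` to a link
incident to `w`. -/
def ConnVert (K : Finset (Link n)) (u w : Fin n) : Prop :=
  ∃ ℓ ∈ K, ∃ f ∈ K, ℓ.Incident u ∧ f.Incident w ∧
    Relation.ReflTransGen (fun a b => a ∈ K ∧ b ∈ K ∧ Intersects a b) ℓ f

/-- The link intersection graph `H[S]` is connected. -/
def ConnLinkSet (S : Finset (Link n)) : Prop :=
  ∀ ℓ ∈ S, ∀ f ∈ S,
    Relation.ReflTransGen (fun a b => a ∈ S ∧ b ∈ S ∧ Intersects a b) ℓ f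

/-- `V(S)`: the vertices incident to a link of `S`. -/
def linkVerts (S : Finset (Link n)) : Set (Fin n) := {v | ∃ ℓ ∈ S, ℓ.Incident v}

/-- A festoon order: the links (listed as `f 0, f 1, …`) form a path in the
link intersection graph visited in this order, with both left endpoints and
right endpoints strictly increasing. -/
def IsFestoonSeq {p : ℕ} (f : Fin p → Link n) : Prop :=
  (∀ i j : Fin p, i < j → (f i).lo < (f j).lo ∧ (f i).hi < (f j).hi) ∧
  (∀ i j : Fin p, (i : ℕ) + 1 = (j : ℕ) → Intersects (f i) (f j)) ∧
  (∀ i j : Fin p, (i : ℕ) + 1 < (j : ℕ) → ¬ Intersects (f i) (f j))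

/-- A festoon: a nonempty link set admitting a festoon order. -/
def IsFestoon (X : Finset (Link n)) : Prop :=
  ∃ p : ℕ, 0 < p ∧ ∃ f : Fin p → Link n,
    IsFestoonSeq f ∧ X = Finset.image f Finset.univ

/-- The festoon interval `I_X`: the interval from the leftmost endpoint of a
link of `X` to the rightmost endpoint of a link of `X`. -/
def festoonIval (X : Finset (Link n)) : Set (Fin n) :=
  {w | (∃ ℓ ∈ X, ℓ.lo ≤ w) ∧ ∃ ℓ ∈ X, w ≤ ℓ.hi}

/-- Two festoons are tangled: some link of one intersects some link of the
other. -/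
def Tangled (X Y : Finset (Link n)) : Prop :=
  ∃ ℓ ∈ X, ∃ f ∈ Y, Intersects ℓ f

/-- A laminar family of vertex sets: any two members are nested or disjoint. -/
def Laminar (𝓛 : Set (Finset (Fin n))) : Prop :=
  ∀ A ∈ 𝓛, ∀ B ∈ 𝓛, A ⊆ B ∨ B ⊆ A ∨ Disjoint A B

/-- An inclusion-wise maximal laminar subfamily of `C_G`. -/
def MaxLaminarCuts [NeZero n] (𝓛 : Set (Finset (Fin n))) : Prop :=
  (∀ C ∈ 𝓛, IsCut C) ∧ Laminar 𝓛 ∧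
    ∀ C : Finset (Fin n), IsCut C → C ∉ 𝓛 → ¬ Laminar (insert C 𝓛)

/-- An `α`-thin link set. -/
def IsThin [NeZero n] (α : ℕ) (K : Finset (Link n)) : Prop :=
  ∃ 𝓛 : Set (Finset (Fin n)), MaxLaminarCuts 𝓛 ∧ ∀ C ∈ 𝓛, (cutLinks K C).card ≤ α

/-- The set `𝒳` of festoons connects `v` to a `v`-good vertex. -/
def ConnectsToGood (F : Finset (DLink n)) (v : Fin n)
    (𝒳 : Finset (Finset (Link n))) : Prop :=
  ∃ w : Fin n, VGood F v w ∧ ConnVert (𝒳.biUnion id) v w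

/-- The undirected graph obtained from a set of directed links by
disregarding orientations. -/
def undirGraph (F : Finset (DLink n)) : SimpleGraph (Fin n) where
  Adj a b := ∃ d ∈ F, (d.tail = a ∧ d.head = b) ∨ (d.tail = b ∧ d.head = a)
  symm := by
    constructor
    rintro a b ⟨d, hd, h⟩
    exact ⟨d, hd, h.symm⟩
  loopless := by
    constructor
    rintro a ⟨d, hd, h⟩
    rcases h with ⟨h1, h2⟩ | ⟨h1, h2⟩ <;> exact d.ne (h1.trans h2.symm)

/-- A directed link going to the left along the ring. -/
def LeftGoing (d : DLink n) : Prop := d.head < d.tail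

/-- A directed link going to the right along the ring. -/
def RightGoing (d : DLink n) : Prop := d.tail < d.head

/-!
Non-shortenability gives every link `d = (u, v)` of `F`, and every vertex `s ≠ u` between `u`
and `v`, a cut containing `s` that `d` alone covers. Uncrossing such private cuts shows that every
vertex but the root has exactly one in-link and that `(V, F)` is an arborescence whose subtrees
are intervals and in which consecutive vertices are comparable. Hence the cuts for which `d` is
responsible are exactly the cuts containing `v` inside the subtree of `v`. For `d ∈ Drop_F(S)` the
cuts `{v}` and `subtree v` show `v ∈ V(S)` and `v ≠ lca(V(S))`. Conversely, a cut responsible for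
`d` that no link of `S` crosses contains all of `V(S)`, as `H[S]` is connected; then `v` is a
common ancestor of `V(S)`, hence its lca.
-/

open Finset

section Cuts

lemma IsCut.zero_notMem [NeZero n] {C : Finset (Fin n)} (hC : IsCut C) : (0 : Fin n) ∉ C := by
  obtain ⟨a, b, ha, -, rfl⟩ := hC
  exact fun h => (mem_Icc.mp h).1.not_gt ha

lemma isCut_singleton [NeZero n] {v : Fin n} (hv : v ≠ 0) : IsCut ({v} : Finset (Fin n)) :=
  ⟨v, v, (Fin.pos_iff_ne_zero' v).mpr hv, le_rfl, (Icc_self v).symm⟩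

lemma IsCut.ordConnected [NeZero n] {C : Finset (Fin n)} (hC : IsCut C) :
    (C : Set (Fin n)).OrdConnected := by
  obtain ⟨a, b, -, -, rfl⟩ := hC
  rw [coe_Icc]
  exact Set.ordConnected_Icc

lemma IsCut.inter [NeZero n] {C E : Finset (Fin n)} (hC : IsCut C) (hE : IsCut E)
    (hCE : (C ∩ E).Nonempty) : IsCut (C ∩ E) := by
  obtain ⟨a, b, ha, -, rfl⟩ := hC
  obtain ⟨c, d, hc, -, rfl⟩ := hE
  obtain ⟨x, hx⟩ := hCE
  simp only [mem_inter, mem_Icc] at hx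
  refine ⟨max a c, min b d, lt_max_of_lt_left ha, ?_, ?_⟩
  · simp only [le_min_iff, max_le_iff]
    omega
  · ext
    simp only [mem_inter, mem_Icc, le_min_iff, max_le_iff]
    omega

lemma IsCut.union [NeZero n] {C E : Finset (Fin n)} (hC : IsCut C) (hE : IsCut E)
    {x y : Fin n} (hx : x ∈ C) (hy : y ∈ E) (hxy : x ⩿ y) : IsCut (C ∪ E) := by
  obtain ⟨a, b, ha, -, rfl⟩ := hC
  obtain ⟨c, d, hc, -, rfl⟩ := hE
  have hxy' : x = y ∨ x.val + 1 = y.val := by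
    rcases wcovBy_iff_eq_or_covBy.mp hxy with h | h
    · exact Or.inl h
    · exact Or.inr (Nat.covBy_iff_add_one_eq.mp (Fin.covBy_iff.mp h))
  simp only [mem_Icc] at hx hy
  refine ⟨min a c, max b d, lt_min ha hc, ?_, ?_⟩
  · simp only [le_max_iff, min_le_iff]
    omega
  · ext
    simp only [mem_union, mem_Icc, le_max_iff, min_le_iff]
    omega

lemma DCovers.of_union {d : DLink n} {C E : Finset (Fin n)} (h : DCovers d (C ∪ E)) :
    DCovers d C ∨ DCovers d E := by
  obtain ⟨htail, hhead⟩ := h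
  rw [mem_union, not_or] at htail
  exact (mem_union.mp hhead).imp (⟨htail.1, ·⟩) (⟨htail.2, ·⟩)

lemma DCovers.of_inter {d : DLink n} {C E : Finset (Fin n)} (h : DCovers d (C ∩ E)) :
    DCovers d C ∨ DCovers d E := by
  obtain ⟨htail, hhead⟩ := h
  rw [mem_inter] at hhead htail
  by_cases hC : d.tail ∈ C
  · exact Or.inr ⟨fun hE => htail ⟨hC, hE⟩, hhead.2⟩
  · exact Or.inl ⟨hC, hhead.1⟩

end Cuts

section Links

lemma endpoints_mem_of_intersects {C : Finset (Fin n)} (hC : (C : Set (Fin n)).OrdConnected)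
    {ℓ f : Link n} (hℓ : ℓ.lo ∈ C ∧ ℓ.hi ∈ C) (hf : ¬ crossesCut f C) (hint : Intersects ℓ f) :
    f.lo ∈ C ∧ f.hi ∈ C := by
  have hone : f.lo ∈ C ∨ f.hi ∈ C := by
    rcases hint with (h | h | h | h) | (⟨h₁, h₂, -⟩ | ⟨-, h₂, h₃⟩)
    · exact .inl (h ▸ hℓ.1)
    · exact .inr (h ▸ hℓ.1)
    · exact .inl (h ▸ hℓ.2)
    · exact .inr (h ▸ hℓ.2)
    · exact .inl (hC.out hℓ.1 hℓ.2 ⟨h₁.le, h₂.le⟩)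
    · exact .inr (hC.out hℓ.1 hℓ.2 ⟨h₂.le, h₃.le⟩)
  unfold crossesCut at hf
  tauto

lemma linkVerts_subset_of_cutLinks_eq_empty {K : Finset (Link n)} (hK : ConnLinkSet K)
    {C : Finset (Fin n)} (hC : (C : Set (Fin n)).OrdConnected) (hcut : cutLinks K C = ∅)
    {v : Fin n} (hv : v ∈ linkVerts K) (hvC : v ∈ C) : linkVerts K ⊆ C := by
  have hnc : ∀ f ∈ K, ¬ crossesCut f C := fun f hf h =>
    eq_empty_iff_forall_notMem.mp hcut f (mem_filter.mpr ⟨hf, h⟩)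
  obtain ⟨ℓ, hℓ, hℓv⟩ := hv
  have hℓC : ℓ.lo ∈ C ∧ ℓ.hi ∈ C := by
    have := hnc ℓ hℓ
    unfold crossesCut at this
    rcases hℓv with rfl | rfl <;> tauto
  have hreach : ∀ f, Relation.ReflTransGen (fun a b => a ∈ K ∧ b ∈ K ∧ Intersects a b) ℓ f →
      f.lo ∈ C ∧ f.hi ∈ C := fun f h => by
    induction h with
    | refl => exact hℓC
    | tail _ hstep ih => exact endpoints_mem_of_intersects hC ih (hnc _ hstep.2.1) hstep.2.2
  rintro u ⟨f, hf, hfu | hfu⟩ <;> subst hfu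
  exacts [(hreach f (hK ℓ hℓ f hf)).1, (hreach f (hK ℓ hℓ f hf)).2]

end Links

structure IsPrivateCut [NeZero n] (F : Finset (DLink n)) (d : DLink n) (C : Finset (Fin n)) :
    Prop where
  isCut : IsCut C
  dCovers : DCovers d C
  eq_of_dCovers : ∀ e ∈ F, DCovers e C → e = d

open Classical in
noncomputable def subtree (F : Finset (DLink n)) (v : Fin n) : Finset (Fin n) :=
  univ.filter (Descend F v)

@[simp]
lemma mem_subtree {F : Finset (DLink n)} {v x : Fin n} : x ∈ subtree F v ↔ Descend F v x := by
  simp [subtree]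

section NonShortenable

variable [NeZero n] {F : Finset (DLink n)}

lemma not_isDirSolution_iff {F' : Finset (DLink n)} :
    ¬ IsDirSolution F' ↔ ∃ C, IsCut C ∧ ∀ e ∈ F', ¬ DCovers e C := by
  simp [IsDirSolution]

lemma NonShortenable.isPrivateCut_of_not_dCovers_erase (hF : NonShortenable F) {d : DLink n}
    {C : Finset (Fin n)} (hC : IsCut C) (hcov : ∀ e ∈ F.erase d, ¬ DCovers e C) :
    IsPrivateCut F d C := by
  have hmem : ∀ e ∈ F, DCovers e C → e = d := fun e he hec => by
    by_contra hne
    exact hcov e (mem_erase.mpr ⟨hne, he⟩) hec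
  obtain ⟨e, he, hec⟩ := hF.1 C hC
  exact ⟨hC, hmem e he hec ▸ hec, hmem⟩

lemma NonShortenable.exists_isPrivateCut (hF : NonShortenable F) {d : DLink n} (hd : d ∈ F)
    {s : Fin n} (hs : s ∈ Set.uIcc d.tail d.head) (hst : s ≠ d.tail) :
    ∃ C, IsPrivateCut F d C ∧ s ∈ C := by
  by_cases hsh : s = d.head
  · obtain ⟨C, hC, hcov⟩ := not_isDirSolution_iff.mp (hF.2.1 d hd)
    have hpriv := hF.isPrivateCut_of_not_dCovers_erase hC hcov
    exact ⟨C, hpriv, hsh ▸ hpriv.dCovers.2⟩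
  · -- the shortening `(s, d.head)` of `d` leaves some cut uncovered; that cut contains `s`
    let d' : DLink n := ⟨s, d.head, hsh⟩
    have hshort : IsShortening d' d := ⟨rfl, hs.1, hs.2⟩
    obtain ⟨C, hC, hcov⟩ :=
      not_isDirSolution_iff.mp (hF.2.2 d hd d' hshort fun h => hst (congrArg DLink.tail h))
    have hpriv :=
      hF.isPrivateCut_of_not_dCovers_erase hC fun e he => hcov e (mem_insert_of_mem he)
    refine ⟨C, hpriv, ?_⟩
    by_contra hsC
    exact hcov d' (mem_insert_self _ _) ⟨hsC, hpriv.dCovers.2⟩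

lemma NonShortenable.head_ne_zero (hF : NonShortenable F) {d : DLink n} (hd : d ∈ F) :
    d.head ≠ 0 := by
  obtain ⟨C, hC, -⟩ := hF.exists_isPrivateCut hd Set.right_mem_uIcc d.ne.symm
  exact fun h0 => hC.isCut.zero_notMem (h0 ▸ hC.dCovers.2)

lemma NonShortenable.exists_head_eq (hF : NonShortenable F) {v : Fin n} (hv : v ≠ 0) :
    ∃ d ∈ F, d.head = v := by
  obtain ⟨d, hd, hcov⟩ := hF.1 _ (isCut_singleton hv)
  exact ⟨d, hd, mem_singleton.mp hcov.2⟩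

lemma NonShortenable.eq_of_head_eq (hF : NonShortenable F) {d₁ d₂ : DLink n} (h₁ : d₁ ∈ F)
    (h₂ : d₂ ∈ F) (hh : d₁.head = d₂.head) : d₁ = d₂ := by
  obtain ⟨C₁, hC₁, -⟩ := hF.exists_isPrivateCut h₁ Set.right_mem_uIcc d₁.ne.symm
  obtain ⟨C₂, hC₂, -⟩ := hF.exists_isPrivateCut h₂ Set.right_mem_uIcc d₂.ne.symm
  have hv₁ : d₁.head ∈ C₁ := hC₁.dCovers.2
  have hv₂ : d₁.head ∈ C₂ := hh ▸ hC₂.dCovers.2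
  obtain ⟨e, he, hcov⟩ := hF.1 _ (hC₁.isCut.union hC₂.isCut hv₁ hv₂ (WCovBy.refl _))
  have htail := hcov.1
  rw [mem_union, not_or] at htail
  rcases hcov.of_union with hcov₁ | hcov₂
  · obtain rfl := hC₁.eq_of_dCovers e he hcov₁
    exact hC₂.eq_of_dCovers e he ⟨htail.2, hv₂⟩
  · obtain rfl := hC₂.eq_of_dCovers e he hcov₂
    exact (hC₁.eq_of_dCovers e he ⟨htail.1, hh ▸ hv₁⟩).symm

lemma NonShortenable.false_of_opposite_overlap (hF : NonShortenable F) {d₁ d₂ : DLink n}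
    (h₁ : d₁ ∈ F) (h₂ : d₂ ∈ F) (haq : d₁.head ≤ d₂.tail) (hqu : d₂.tail < d₁.tail)
    (huy : d₁.tail ≤ d₂.head) : False := by
  -- private cuts of `d₁` ending just before `d₁.tail` and of `d₂` starting just after `d₂.tail`
  obtain ⟨p, hqp, hpu⟩ := exists_le_covBy_of_lt hqu
  obtain ⟨r, hqr, hru⟩ := exists_covBy_le_of_lt hqu
  obtain ⟨C, hC, hpC⟩ := hF.exists_isPrivateCut h₁ (s := p)
    (Set.mem_uIcc.mpr (Or.inr ⟨haq.trans hqp, hpu.le⟩)) hpu.ne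
  obtain ⟨E, hE, hrE⟩ := hF.exists_isPrivateCut h₂ (s := r)
    (Set.mem_uIcc.mpr (Or.inl ⟨hqr.le, hru.trans huy⟩)) hqr.ne'
  have hClt : ∀ x ∈ C, x < d₁.tail := fun x hx => not_le.mp fun hux =>
    hC.dCovers.1 (hC.isCut.ordConnected.out hpC hx ⟨hpu.le, hux⟩)
  have hEgt : ∀ x ∈ E, d₂.tail < x := fun x hx => not_le.mp fun hxq =>
    hE.dCovers.1 (hE.isCut.ordConnected.out hx hrE ⟨hxq, hqr.le⟩)
  rcases le_or_gt r p with hrp | hpr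
  · have hpE : p ∈ E := hE.isCut.ordConnected.out hrE hE.dCovers.2 ⟨hrp, hpu.le.trans huy⟩
    obtain ⟨e, he, hcov⟩ := hF.1 _ (hC.isCut.inter hE.isCut ⟨p, mem_inter.mpr ⟨hpC, hpE⟩⟩)
    have hhead := mem_inter.mp hcov.2
    rcases hcov.of_inter with hcovC | hcovE
    · obtain rfl := hC.eq_of_dCovers e he hcovC
      exact (hEgt _ hhead.2).not_ge haq
    · obtain rfl := hE.eq_of_dCovers e he hcovE
      exact (hClt _ hhead.1).not_ge huy
  · have hp : p = d₂.tail := (hqr.eq_or_eq hqp hpr.le).resolve_right hpr.ne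
    rw [hp] at hpC hpu
    have huE : d₁.tail ∈ E := hE.isCut.ordConnected.out hrE hE.dCovers.2 ⟨hru, huy⟩
    obtain ⟨e, he, hcov⟩ := hF.1 _ (hC.isCut.union hE.isCut hpC huE hpu.wcovBy)
    have htail := hcov.1
    rw [mem_union, not_or] at htail
    rcases hcov.of_union with hcovC | hcovE
    · obtain rfl := hC.eq_of_dCovers e he hcovC
      exact htail.2 huE
    · obtain rfl := hE.eq_of_dCovers e he hcovE
      exact htail.1 hpC

lemma NonShortenable.exists_tail_notMem (hF : NonShortenable F) (T : Finset (Fin n))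
    (hT : T.Nonempty) (h0 : (0 : Fin n) ∉ T) : ∃ x ∈ T, ∀ d ∈ F, d.head = x → d.tail ∉ T := by
  induction T using Finset.strongInduction with
  | H T ih =>
  by_contra! hclosed
  -- the parent `d.tail` of the minimum `d.head` of `T` lies to its right. The vertices of `T`
  -- from `d.tail` on form a smaller closed set: a parent link entering them from
  -- `[d.head, d.tail)` would overlap `d` in the opposite direction
  obtain ⟨a, haT, hmin⟩ := T.exists_min_image id hT
  obtain ⟨d, hd, rfl, hdT⟩ := hclosed a haT
  have hlt : d.head < d.tail := lt_of_le_of_ne (hmin _ hdT) d.ne.symm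
  obtain ⟨x, hxT', hx⟩ := ih (T.filter (d.tail ≤ ·))
    (filter_ssubset.mpr ⟨d.head, haT, not_le.mpr hlt⟩) ⟨d.tail, mem_filter.mpr ⟨hdT, le_rfl⟩⟩
    fun h => h0 (mem_filter.mp h).1
  obtain ⟨hxT, hux⟩ := mem_filter.mp hxT'
  obtain ⟨e, he, rfl, heT⟩ := hclosed x hxT
  have hqu : e.tail < d.tail := not_le.mp fun h => hx e he rfl (mem_filter.mpr ⟨heT, h⟩)
  exact hF.false_of_opposite_overlap hd he (hmin _ heT) hqu hux

lemma NonShortenable.descend_from_zero (hF : NonShortenable F) (v : Fin n) : Descend F 0 v := by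
  classical
  by_contra hv
  obtain ⟨x, hxT, hout⟩ := hF.exists_tail_notMem (univ.filter (¬ Descend F 0 ·))
    ⟨v, mem_filter.mpr ⟨mem_univ v, hv⟩⟩ fun h => (mem_filter.mp h).2 .refl
  have hx : ¬ Descend F 0 x := (mem_filter.mp hxT).2
  obtain ⟨d, hd, rfl⟩ := hF.exists_head_eq fun h => hx (h ▸ .refl)
  have hdt : Descend F 0 d.tail := by simpa using hout d hd rfl
  exact hx (hdt.tail ⟨d, hd, rfl, rfl⟩)

lemma NonShortenable.eq_zero_of_descend (hF : NonShortenable F) {v : Fin n}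
    (h : Descend F v 0) : v = 0 := by
  rcases Relation.ReflTransGen.cases_tail h with h | ⟨_, _, e, he, -, he0⟩
  · exact h.symm
  · exact absurd he0 (hF.head_ne_zero he)

lemma NonShortenable.descend_tail_of_descend_head (hF : NonShortenable F) {x : Fin n}
    {d : DLink n} (hd : d ∈ F) (h : Descend F x d.head) (hne : x ≠ d.head) :
    Descend F x d.tail := by
  rcases Relation.ReflTransGen.cases_tail h with h | ⟨m, hm, e, he, rfl, heh⟩
  · exact absurd h.symm hne
  · rwa [← hF.eq_of_head_eq he hd heh]

lemma NonShortenable.descend_antisymm (hF : NonShortenable F) {x y : Fin n}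
    (hxy : Descend F x y) (hyx : Descend F y x) : x = y := by
  classical
  by_contra hne
  have hx0 : x ≠ 0 := fun h => hne (h ▸ (hF.eq_zero_of_descend (h ▸ hyx)).symm)
  obtain ⟨z, hzT, hout⟩ := hF.exists_tail_notMem
    (univ.filter fun z => Descend F x z ∧ Descend F z x)
    ⟨x, mem_filter.mpr ⟨mem_univ x, .refl, .refl⟩⟩
    fun h => hx0 (hF.eq_zero_of_descend (mem_filter.mp h).2.1)
  obtain ⟨hxz, hzx⟩ := (mem_filter.mp hzT).2
  obtain ⟨d, hd, rfl⟩ := hF.exists_head_eq fun h => hx0 (hF.eq_zero_of_descend (h ▸ hxz))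
  refine hout d hd rfl (mem_filter.mpr ⟨mem_univ _, ?_, .head ⟨d, hd, rfl, rfl⟩ hzx⟩)
  by_cases hxd : x = d.head
  · exact hxy.trans (hF.descend_tail_of_descend_head hd (hxd ▸ hyx) (hxd ▸ Ne.symm hne))
  · exact hF.descend_tail_of_descend_head hd hxz hxd

lemma NonShortenable.descend_total (hF : NonShortenable F) {x y v : Fin n}
    (hx : Descend F x v) (hy : Descend F y v) : Descend F x y ∨ Descend F y x := by
  induction hx generalizing y with
  | refl => exact .inr hy
  | @tail b c hxb hbc ih =>
    rcases Relation.ReflTransGen.cases_tail hy with rfl | ⟨m, hym, e, he, rfl, heh⟩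
    · exact .inl (hxb.tail hbc)
    · obtain ⟨d, hd, rfl, hdh⟩ := hbc
      obtain rfl := hF.eq_of_head_eq he hd (heh.trans hdh.symm)
      exact ih hym

lemma NonShortenable.exists_isLCA (hF : NonShortenable F) {U : Set (Fin n)} (hU : U.Nonempty) :
    ∃ w, IsLCA F w U := by
  classical
  obtain ⟨u, hu⟩ := hU
  -- the common ancestors of `U` form a chain; take one with the most ancestors
  obtain ⟨w, hwA, hwmax⟩ := (univ.filter fun x => ∀ u ∈ U, Descend F x u).exists_max_image
    (fun x => (univ.filter (Descend F · x)).card)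
    ⟨0, mem_filter.mpr ⟨mem_univ _, fun u _ => hF.descend_from_zero u⟩⟩
  have hwU := (mem_filter.mp hwA).2
  refine ⟨w, hwU, fun x hx => ?_⟩
  rcases hF.descend_total (hx u hu) (hwU u hu) with h | h
  · exact h
  · have hsub : univ.filter (Descend F · w) ⊆ univ.filter (Descend F · x) := fun ζ hζ =>
      mem_filter.mpr ⟨mem_univ _, (mem_filter.mp hζ).2.trans h⟩
    have heq := eq_of_subset_of_card_le hsub (hwmax x (mem_filter.mpr ⟨mem_univ _, hx⟩))
    have hxx : x ∈ univ.filter (Descend F · x) := mem_filter.mpr ⟨mem_univ _, .refl⟩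
    rw [← heq] at hxx
    exact (mem_filter.mp hxx).2

lemma NonShortenable.descend_of_isPrivateCut (hF : NonShortenable F) {e : DLink n}
    {C : Finset (Fin n)} (hC : IsPrivateCut F e C) {x : Fin n} (hx : x ∈ C) :
    Descend F e.head x := by
  -- the path from the root to `x` enters `C` through a link covering `C`
  induction hF.descend_from_zero x with
  | refl => exact absurd hx hC.isCut.zero_notMem
  | @tail b c hb hbc ih =>
    obtain ⟨d, hd, rfl, rfl⟩ := hbc
    by_cases hbC : d.tail ∈ C
    · exact (ih hbC).tail ⟨d, hd, rfl, rfl⟩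
    · exact hC.eq_of_dCovers d hd ⟨hbC, hx⟩ ▸ .refl

lemma NonShortenable.descend_head_of_mem_uIcc (hF : NonShortenable F) {d : DLink n}
    (hd : d ∈ F) {s : Fin n} (hs : s ∈ Set.uIcc d.tail d.head) (hst : s ≠ d.tail) :
    Descend F d.head s := by
  obtain ⟨C, hC, hsC⟩ := hF.exists_isPrivateCut hd hs hst
  exact hF.descend_of_isPrivateCut hC hsC

lemma NonShortenable.descend_of_mem_uIcc (hF : NonShortenable F) {x y c : Fin n}
    (h : Descend F x y) (hc : c ∈ Set.uIcc x y) : Descend F x c := by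
  induction h generalizing c with
  | refl =>
    rw [Set.uIcc_self, Set.mem_singleton_iff] at hc
    exact hc ▸ .refl
  | @tail b z hb hbz ih =>
    rcases Set.uIcc_subset_uIcc_union_uIcc hc with hc | hc
    · exact ih hc
    · obtain ⟨d, hd, rfl, rfl⟩ := hbz
      by_cases hcb : c = d.tail
      · exact hcb ▸ hb
      · exact (hb.tail ⟨d, hd, rfl, rfl⟩).trans (hF.descend_head_of_mem_uIcc hd hc hcb)

lemma NonShortenable.ordConnected_descend (hF : NonShortenable F) (z : Fin n) :
    Set.OrdConnected {c | Descend F z c} := by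
  refine ⟨fun a ha b hb c hc => ?_⟩
  rcases Set.uIcc_subset_uIcc_union_uIcc (Set.Icc_subset_uIcc hc) with h | h
  · exact hF.descend_of_mem_uIcc ha (Set.uIcc_comm a z ▸ h)
  · exact hF.descend_of_mem_uIcc hb h

lemma NonShortenable.descend_head_of_mem_uIcc_tail (hF : NonShortenable F) {d : DLink n}
    (hd : d ∈ F) {y s : Fin n} (hy : Descend F d.head y) (hs : s ∈ Set.uIcc d.tail y)
    (hst : s ≠ d.tail) : Descend F d.head s := by
  rcases Set.uIcc_subset_uIcc_union_uIcc hs with hs | hs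
  · exact hF.descend_head_of_mem_uIcc hd hs hst
  · exact hF.descend_of_mem_uIcc hy hs

lemma NonShortenable.descend_or_descend_of_covBy (hF : NonShortenable F) {x y : Fin n}
    (hxy : x ⋖ y) : Descend F x y ∨ Descend F y x := by
  by_contra! hxy'
  obtain ⟨z, hzU, hzmin⟩ := hF.exists_isLCA (U := {x, y}) (Set.insert_nonempty _ _)
  have hzx : Descend F z x := hzU x (by simp)
  have hzy : Descend F z y := hzU y (by simp)
  have hcommon : ∀ c, Descend F c x → Descend F c y → Descend F c z := fun c hcx hcy =>
    hzmin c (by rintro u (rfl | rfl) <;> assumption)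
  -- `x` and `y` lie below distinct children of their lca `z`; the link from `z` to the child on
  -- the far side would pass over the nearer of `x`, `y`, putting it into that child's subtree
  obtain ⟨k, ⟨e, he, hez, rfl⟩, hkx⟩ :=
    (Relation.ReflTransGen.cases_head hzx).resolve_left fun h => hxy'.1 (h ▸ hzy)
  obtain ⟨l, ⟨f, hf, hfz, rfl⟩, hly⟩ :=
    (Relation.ReflTransGen.cases_head hzy).resolve_left fun h => hxy'.2 (h ▸ hzx)
  have hky : ¬ Descend F e.head y := fun hky => e.ne <| hez.trans <|
    hF.descend_antisymm (.single ⟨e, he, hez, rfl⟩) (hcommon _ hkx hky)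
  have hlx : ¬ Descend F f.head x := fun hlx => f.ne <| hfz.trans <|
    hF.descend_antisymm (.single ⟨f, hf, hfz, rfl⟩) (hcommon _ hlx hly)
  have hzx' : z ≠ x := fun h => hxy'.1 (h ▸ hzy)
  have hzy' : z ≠ y := fun h => hxy'.2 (h ▸ hzx)
  rcases lt_or_ge z x with hz | hz
  · exact hlx (hF.descend_head_of_mem_uIcc_tail hf hly
      (Set.mem_uIcc.mpr (.inl ⟨hfz ▸ hz.le, hxy.le⟩)) (hfz ▸ hzx'.symm))
  · have hyz : y < z := lt_of_le_of_ne
      (not_lt.mp fun h => hzx' ((hxy.eq_or_eq hz h.le).resolve_right hzy')) hzy'.symm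
    exact hky (hF.descend_head_of_mem_uIcc_tail he hkx
      (Set.mem_uIcc.mpr (.inr ⟨hxy.le, hez ▸ hyz.le⟩)) (hez ▸ hzy'.symm))

lemma NonShortenable.descend_of_covBy_of_not_descend (hF : NonShortenable F) {v a b : Fin n}
    (hb : Descend F v b) (ha : ¬ Descend F v a) (hab : a ⋖ b ∨ b ⋖ a) : Descend F a v := by
  have hab' : Descend F a b := by
    rcases hab with h | h <;> rcases hF.descend_or_descend_of_covBy h with h | h
    exacts [h, absurd (hb.trans h) ha, absurd (hb.trans h) ha, h]
  exact (hF.descend_total hab' hb).resolve_right ha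

lemma NonShortenable.isCut_subtree (hF : NonShortenable F) {v : Fin n} (hv : v ≠ 0) :
    IsCut (subtree F v) := by
  have hne : (subtree F v).Nonempty := ⟨v, mem_subtree.mpr .refl⟩
  have hmin := mem_subtree.mp (min'_mem _ hne)
  have hmax := mem_subtree.mp (max'_mem _ hne)
  refine ⟨_, _, (Fin.pos_iff_ne_zero' _).mpr fun h => hv (hF.eq_zero_of_descend (h ▸ hmin)),
    min'_le _ _ (max'_mem _ hne), ext fun x => ⟨fun hx => ?_, fun hx => ?_⟩⟩
  · exact mem_Icc.mpr ⟨min'_le _ _ hx, le_max' _ _ hx⟩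
  · exact mem_subtree.mpr ((hF.ordConnected_descend v).out hmin hmax (mem_Icc.mp hx))

lemma NonShortenable.notMem_of_responsible (hF : NonShortenable F) {d : DLink n}
    {C : Finset (Fin n)} (hresp : Responsible F d C) {ζ : Fin n} (hζ : Descend F ζ d.tail) :
    ζ ∉ C := by
  induction hF.descend_from_zero ζ with
  | refl => exact hresp.1.zero_notMem
  | @tail b c hb hbc ih =>
    obtain ⟨e, he, rfl, rfl⟩ := hbc
    exact fun hcC => hresp.2.2 e he hζ ⟨ih (.head ⟨e, he, rfl, rfl⟩ hζ), hcC⟩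

lemma NonShortenable.responsible_iff (hF : NonShortenable F) {d : DLink n} (hd : d ∈ F)
    {C : Finset (Fin n)} :
    Responsible F d C ↔ IsCut C ∧ d.head ∈ C ∧ C ⊆ subtree F d.head := by
  constructor
  · intro hresp
    refine ⟨hresp.1, hresp.2.1.2, fun x hxC => ?_⟩
    by_contra hx
    obtain ⟨m, M, -, -, hsub⟩ := hF.isCut_subtree (hF.head_ne_zero hd)
    -- a vertex of `C` adjacent to the interval `subtree F d.head = [m, M]` is an ancestor of
    -- `d.head`, which `Responsible` forbids
    have hanc : ∀ a b, a ∈ C → b ∈ Icc m M → a ∉ Icc m M → (a ⋖ b ∨ b ⋖ a) → False := by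
      intro a b haC hb ha hab
      rw [← hsub, mem_subtree] at hb ha
      have hav := hF.descend_of_covBy_of_not_descend hb ha hab
      have hne : a ≠ d.head := fun h => ha (h ▸ .refl)
      exact hF.notMem_of_responsible hresp (hF.descend_tail_of_descend_head hd hav hne) haC
    have hv : d.head ∈ Icc m M := hsub ▸ mem_subtree.mpr .refl
    rw [hsub, mem_Icc, not_and_or, not_le, not_le] at hx
    rw [mem_Icc] at hv
    rcases hx with hxm | hMx
    · obtain ⟨a, hxa, ham⟩ := exists_le_covBy_of_lt hxm
      exact hanc a m (hresp.1.ordConnected.out hxC hresp.2.1.2 ⟨hxa, ham.le.trans hv.1⟩)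
        (left_mem_Icc.mpr (hv.1.trans hv.2)) (fun h => ham.lt.not_ge (mem_Icc.mp h).1)
        (.inl ham)
    · obtain ⟨a, hMa, hax⟩ := exists_covBy_le_of_lt hMx
      exact hanc a M (hresp.1.ordConnected.out hresp.2.1.2 hxC ⟨hv.2.trans hMa.le, hax⟩)
        (right_mem_Icc.mpr (hv.1.trans hv.2)) (fun h => hMa.lt.not_ge (mem_Icc.mp h).2)
        (.inr hMa)
  · rintro ⟨hC, hvC, hsub⟩
    have hstep : Descend F d.tail d.head := .single ⟨d, hd, rfl, rfl⟩
    have htail : d.tail ∉ C := fun ht =>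
      d.ne (hF.descend_antisymm hstep (mem_subtree.mp (hsub ht)))
    refine ⟨hC, ⟨htail, hvC⟩, fun e _ he hcov => ?_⟩
    have heq : e.head = d.head :=
      hF.descend_antisymm (he.trans hstep) (mem_subtree.mp (hsub hcov.2))
    exact d.ne (hF.descend_antisymm hstep (heq ▸ he))

lemma NonShortenable.head_mem_linkVerts_of_mem_drop (hF : NonShortenable F)
    {K : Finset (Link n)} {d : DLink n} (hd : d ∈ Drop F K) : d.head ∈ linkVerts K := by
  have hresp : Responsible F d {d.head} := (hF.responsible_iff hd.1).mpr
    ⟨isCut_singleton (hF.head_ne_zero hd.1), mem_singleton_self _,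
      singleton_subset_iff.mpr (mem_subtree.mpr .refl)⟩
  obtain ⟨ℓ, hℓ⟩ := hd.2 _ hresp
  obtain ⟨hℓK, hcross⟩ := mem_filter.mp hℓ
  refine ⟨ℓ, hℓK, ?_⟩
  rcases hcross with ⟨h, -⟩ | ⟨-, h⟩
  · exact .inl (mem_singleton.mp h)
  · exact .inr (mem_singleton.mp h)

lemma NonShortenable.head_ne_of_mem_drop (hF : NonShortenable F) {K : Finset (Link n)}
    {d : DLink n} {w : Fin n} (hd : d ∈ Drop F K) (hw : IsLCA F w (linkVerts K)) :
    d.head ≠ w := by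
  rintro rfl
  have hresp : Responsible F d (subtree F d.head) := (hF.responsible_iff hd.1).mpr
    ⟨hF.isCut_subtree (hF.head_ne_zero hd.1), mem_subtree.mpr .refl, subset_rfl⟩
  obtain ⟨ℓ, hℓ⟩ := hd.2 _ hresp
  obtain ⟨hℓK, hcross⟩ := mem_filter.mp hℓ
  have hlo : ℓ.lo ∈ subtree F d.head := mem_subtree.mpr (hw.1 _ ⟨ℓ, hℓK, .inl rfl⟩)
  have hhi : ℓ.hi ∈ subtree F d.head := mem_subtree.mpr (hw.1 _ ⟨ℓ, hℓK, .inr rfl⟩)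
  unfold crossesCut at hcross
  tauto

lemma NonShortenable.mem_drop (hF : NonShortenable F) {K : Finset (Link n)}
    (hK : ConnLinkSet K) {d : DLink n} (hd : d ∈ F) {w : Fin n} (hw : IsLCA F w (linkVerts K))
    (hv : d.head ∈ linkVerts K) (hvw : d.head ≠ w) : d ∈ Drop F K := by
  refine ⟨hd, fun C hresp => ?_⟩
  obtain ⟨hC, hvC, hsub⟩ := (hF.responsible_iff hd).mp hresp
  rw [nonempty_iff_ne_empty]
  intro hcut
  have hKC := linkVerts_subset_of_cutLinks_eq_empty hK hC.ordConnected hcut hv hvC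
  have hvw' : Descend F d.head w := hw.2 _ fun u hu => mem_subtree.mp (hsub (hKC hu))
  exact hvw (hF.descend_antisymm hvw' (hw.1 _ hv))

end NonShortenable

theorem drop_of_connected_set_general {n : ℕ}
    (F : Finset (DLink (n + 3))) (hF : NonShortenable F)
    (S : Finset (Link (n + 3))) (hS : S.Nonempty)
    (hconn : ConnLinkSet S) :
    ∃ w : Fin (n + 3), IsLCA F w (linkVerts S) ∧
      Drop F S = {d : DLink (n + 3) | d ∈ F ∧ d.head ∈ linkVerts S} \
        {d : DLink (n + 3) | d ∈ F ∧ d.head = w} := by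
  obtain ⟨ℓ, hℓ⟩ := hS
  obtain ⟨w, hw⟩ := hF.exists_isLCA (U := linkVerts S) ⟨ℓ.lo, ℓ, hℓ, .inl rfl⟩
  refine ⟨w, hw, Set.ext fun d => ⟨fun hd => ?_, fun ⟨⟨hdF, hv⟩, hvw⟩ => ?_⟩⟩
  · exact ⟨⟨hd.1, hF.head_mem_linkVerts_of_mem_drop hd⟩,
      fun h => hF.head_ne_of_mem_drop hd hw h.2⟩
  · exact hF.mem_drop hconn hdF hw hv fun h => hvw ⟨hdF, h⟩

/-- for a non-shortenable directed WRAP solution `F` and a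
nonempty link set `S ⊆ L` whose link intersection graph `H[S]` is connected,
`Drop_F(S) = (⋃_{v ∈ V(S)} δ⁻_F(v)) \ δ⁻_F(lca(V(S)))`. -/
theorem drop_of_connected_set {n : ℕ}
    (L : Finset (Link (n + 3))) (c : Link (n + 3) → ℝ)
    (F : Finset (DLink (n + 3))) (hF : NonShortenable F)
    (S : Finset (Link (n + 3))) (hSL : S ⊆ L) (hS : S.Nonempty)
    (hconn : ConnLinkSet S) :
    ∃ w : Fin (n + 3), IsLCA F w (linkVerts S) ∧
      Drop F S = {d : DLink (n + 3) | d ∈ F ∧ d.head ∈ linkVerts S} \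
        {d : DLink (n + 3) | d ∈ F ∧ d.head = w} :=
  drop_of_connected_set_general F hF S hS hconn
end

section
/- Let (G, L, c, r, e_r) be a rooted WRAP instance, X ⊆ L a festoon, and C ∈ C_G a 2-cut. Then |δ_X(C)| ≤ 4, i.e., at most 4 links of X have exactly one endpoint in C. -/
variable {n : ℕ}

lemma Finset.card_le_two_of_le_succ {s : Finset ℕ}
    (h : ∀ i ∈ s, ∀ j ∈ s, i < j → j ≤ i + 1) : s.card ≤ 2 := by
  rcases s.eq_empty_or_nonempty with rfl | hs
  · simp
  have hsub : s ⊆ Finset.Icc (s.min' hs) (s.min' hs + 1) := fun j hj => by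
    have hmin := s.min'_le j hj
    rcases hmin.eq_or_lt with heq | hlt
    · simp [← heq]
    · simpa [hmin] using h _ (s.min'_mem hs) j hj hlt
  have := Finset.card_le_card hsub
  rw [Nat.card_Icc] at this
  omega

namespace IsFestoonSeq

variable {p : ℕ} {f : Fin p → Link n}

/-- Such links cross, and non-consecutive links of a festoon do not intersect. -/
lemma le_succ_of_lo_lt_hi (hf : IsFestoonSeq f) {i j : Fin p} (hij : i < j)
    (hji : (f j).lo < (f i).hi) : (j : ℕ) ≤ i + 1 := by
  by_contra! hgap
  obtain ⟨hlo, hhi⟩ := hf.1 i j hij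
  exact hf.2.2 i j hgap (Or.inr (Or.inl ⟨hlo, hji, hhi⟩))

end IsFestoonSeq

lemma IsFestoon.card_le_two_of_lo_lt_hi {X s : Finset (Link n)} (hX : IsFestoon X)
    (hsX : s ⊆ X) (hs : ∀ ℓ ∈ s, ∀ ℓ' ∈ s, ℓ'.lo < ℓ.hi) : s.card ≤ 2 := by
  obtain ⟨p, -, f, hf, rfl⟩ := hX
  set t := Finset.univ.filter (fun i => f i ∈ s)
  have hst : s ⊆ t.image f := fun ℓ hℓ => by
    obtain ⟨i, -, rfl⟩ := Finset.mem_image.mp (hsX hℓ)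
    simpa [t] using ⟨i, hℓ, rfl⟩
  have ht : (t.image Fin.val).card ≤ 2 := by
    refine Finset.card_le_two_of_le_succ ?_
    simp only [Finset.mem_image, Finset.mem_filter, Finset.mem_univ, true_and, t]
    rintro _ ⟨i, hi, rfl⟩ _ ⟨j, hj, rfl⟩ hij
    exact hf.le_succ_of_lo_lt_hi hij (hs _ hi _ hj)
  calc s.card ≤ (t.image f).card := Finset.card_le_card hst
    _ ≤ t.card := Finset.card_image_le
    _ = (t.image Fin.val).card := (Finset.card_image_of_injective t Fin.val_injective).symm
    _ ≤ 2 := ht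

lemma crossesCut_Icc {ℓ : Link n} {a b : Fin n} (h : crossesCut ℓ (Finset.Icc a b)) :
    (ℓ.lo < a ∧ a ≤ ℓ.hi) ∨ (ℓ.lo ≤ b ∧ b < ℓ.hi) := by
  have := ℓ.lo_lt_hi
  simp only [crossesCut, Finset.mem_Icc, not_and_or, not_le] at h
  rcases h with ⟨⟨hal, hlb⟩, hha | hbh⟩ | ⟨hla | hbl, hah, hhb⟩
  · exact absurd (hal.trans this.le) hha.not_ge
  · exact Or.inr ⟨hlb, hbh⟩
  · exact Or.inl ⟨hla, hah⟩
  · exact absurd (this.trans_le hhb) hbl.not_gt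

theorem festoon_light_general {n : ℕ}
    (X : Finset (Link (n + 3))) (hX : IsFestoon X)
    (C : Finset (Fin (n + 3))) (hC : IsCut C) :
    (cutLinks X C).card ≤ 4 := by
  obtain ⟨a, b, -, -, rfl⟩ := hC
  set left := X.filter (fun ℓ => ℓ.lo < a ∧ a ≤ ℓ.hi)
  set right := X.filter (fun ℓ => ℓ.lo ≤ b ∧ b < ℓ.hi)
  have hsub : cutLinks X (Finset.Icc a b) ⊆ left ∪ right := fun ℓ hℓ => by
    rw [cutLinks, Finset.mem_filter] at hℓ
    rcases crossesCut_Icc hℓ.2 with h | h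
    · exact Finset.mem_union_left _ (Finset.mem_filter.mpr ⟨hℓ.1, h⟩)
    · exact Finset.mem_union_right _ (Finset.mem_filter.mpr ⟨hℓ.1, h⟩)
  have hleft : left.card ≤ 2 := hX.card_le_two_of_lo_lt_hi (Finset.filter_subset _ _)
    fun ℓ hℓ ℓ' hℓ' => ((Finset.mem_filter.mp hℓ').2.1).trans_le (Finset.mem_filter.mp hℓ).2.2
  have hright : right.card ≤ 2 := hX.card_le_two_of_lo_lt_hi (Finset.filter_subset _ _)
    fun ℓ hℓ ℓ' hℓ' => ((Finset.mem_filter.mp hℓ').2.1).trans_lt (Finset.mem_filter.mp hℓ).2.2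
  calc (cutLinks X (Finset.Icc a b)).card ≤ (left ∪ right).card := Finset.card_le_card hsub
    _ ≤ left.card + right.card := Finset.card_union_le _ _
    _ ≤ 4 := by omega

/-- a festoon `X` crosses any 2-cut `C ∈ C_G` at most four
times: `|δ_X(C)| ≤ 4`. -/
theorem festoon_light {n : ℕ}
    (L : Finset (Link (n + 3))) (c : Link (n + 3) → ℝ)
    (X : Finset (Link (n + 3))) (hXL : X ⊆ L) (hX : IsFestoon X)
    (C : Finset (Fin (n + 3))) (hC : IsCut C) :
    (cutLinks X C).card ≤ 4 :=
  festoon_light_general X hX C hC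
end

section
/- Let X, Y, Z be festoons with X ≼ Y ≼ Z (i.e., I_X ⊆ I_Y ⊆ I_Z). If X and Z are tangled, then Y and Z are tangled. -/
variable {n : ℕ}

/-!
Suppose `Y` and `Z` are not tangled. A link of `Z` meeting a link of `X` has an endpoint in
`I_X ⊆ I_Y`, and a link that has an endpoint in `I_Y` but meets no link of `Y` lies inside a
single link of `Y` with no shared endpoint, hence strictly inside `I_Y`. Because consecutive
links of `Z` overlap and the left end `a` of `I_Y` lies in `I_Z`, some link of `Z` to the left of
that one contains `a`. Its right endpoint then lies in `I_Y` while its left endpoint is at most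
`a`, a contradiction.
-/

namespace Link

variable {n : ℕ}

lemma lt_lo_and_hi_lt_of_not_intersects {ℓ z : Link n} (h : ¬ Intersects ℓ z) {v : Fin n}
    (hv : z.Incident v) (hvℓ : v ∈ Set.Icc ℓ.lo ℓ.hi) : ℓ.lo < z.lo ∧ z.hi < ℓ.hi := by
  have := z.lo_lt_hi
  simp only [Intersects, Crossing, Link.Incident, Set.mem_Icc] at h hv hvℓ
  omega

lemma lo_le_hi_of_intersects {ℓ f : Link n} (h : Intersects ℓ f) (hlo : ℓ.lo < f.lo)
    (hhi : ℓ.hi < f.hi) : f.lo ≤ ℓ.hi := by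
  have := f.lo_lt_hi
  simp only [Intersects, Crossing] at h
  omega

lemma exists_incident_mem_Icc_of_intersects {ℓ f : Link n} (h : Intersects ℓ f) :
    ∃ v, f.Incident v ∧ v ∈ Set.Icc ℓ.lo ℓ.hi := by
  by_cases hlo : f.lo ∈ Set.Icc ℓ.lo ℓ.hi
  · exact ⟨f.lo, Or.inl rfl, hlo⟩
  refine ⟨f.hi, Or.inr rfl, ?_⟩
  have := ℓ.lo_lt_hi
  have := f.lo_lt_hi
  simp only [Intersects, Crossing, Set.mem_Icc] at h hlo ⊢
  omega

end Link

lemma Icc_subset_festoonIval {n : ℕ} {X : Finset (Link n)} {ℓ : Link n} (hℓ : ℓ ∈ X) :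
    Set.Icc ℓ.lo ℓ.hi ⊆ festoonIval X :=
  fun _ hv => ⟨⟨ℓ, hℓ, hv.1⟩, ℓ, hℓ, hv.2⟩

lemma IsFestoon.exists_seq {n : ℕ} {X : Finset (Link n)} (hX : IsFestoon X) :
    ∃ (m : ℕ) (f : Fin (m + 1) → Link n), IsFestoonSeq f ∧ X = Finset.image f Finset.univ := by
  obtain ⟨p, hp, f, hf, rfl⟩ := hX
  obtain ⟨m, rfl⟩ := Nat.exists_eq_add_one_of_ne_zero hp.ne'
  exact ⟨m, f, hf, rfl⟩

namespace IsFestoonSeq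

lemma strictMono_lo {n p : ℕ} {f : Fin p → Link n} (hf : IsFestoonSeq f) :
    StrictMono fun i => (f i).lo :=
  fun i j hij => (hf.1 i j hij).1

lemma strictMono_hi {n p : ℕ} {f : Fin p → Link n} (hf : IsFestoonSeq f) :
    StrictMono fun i => (f i).hi :=
  fun i j hij => (hf.1 i j hij).2

variable {n m : ℕ} {f : Fin (m + 1) → Link n}

lemma lo_succ_le_hi_castSucc (hf : IsFestoonSeq f) (k : Fin m) :
    (f k.succ).lo ≤ (f k.castSucc).hi :=
  Link.lo_le_hi_of_intersects (hf.2.1 k.castSucc k.succ (by simp))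
    (hf.strictMono_lo k.castSucc_lt_succ) (hf.strictMono_hi k.castSucc_lt_succ)

/-- Consecutive links of a festoon overlap, so together they leave no gap. -/
lemma exists_mem_Icc (hf : IsFestoonSeq f) {i k : Fin (m + 1)} (hik : i ≤ k) {v : Fin n}
    (hv : v ∈ Set.Icc (f i).lo (f k).hi) :
    ∃ j, i ≤ j ∧ j ≤ k ∧ v ∈ Set.Icc (f j).lo (f j).hi := by
  induction k using Fin.induction with
  | zero =>
    obtain rfl := Fin.le_zero_iff.mp hik
    exact ⟨0, le_rfl, le_rfl, hv⟩
  | succ k ih =>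
    by_cases hk : (f k.succ).lo ≤ v
    · exact ⟨k.succ, hik, le_rfl, hk, hv.2⟩
    have hik' : i ≤ k.castSucc := by
      rw [Fin.le_castSucc_iff]
      exact lt_of_le_of_ne hik fun h => hk (h ▸ hv.1)
    obtain ⟨j, hij, hjk, hj⟩ :=
      ih hik' ⟨hv.1, (not_le.mp hk).le.trans (hf.lo_succ_le_hi_castSucc k)⟩
    exact ⟨j, hij, hjk.trans k.castSucc_lt_succ.le, hj⟩

lemma festoonIval_eq (hf : IsFestoonSeq f) :
    festoonIval (Finset.image f Finset.univ) = Set.Icc (f 0).lo (f (Fin.last m)).hi := by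
  ext v
  simp only [festoonIval, Finset.mem_image, Finset.mem_univ, true_and, Set.mem_ofPred_eq,
    exists_exists_eq_and, Set.mem_Icc]
  constructor
  · rintro ⟨⟨i, hi⟩, j, hj⟩
    exact ⟨(hf.strictMono_lo.monotone (Fin.zero_le i)).trans hi,
      hj.trans (hf.strictMono_hi.monotone (Fin.le_last j))⟩
  · rintro ⟨h0, hlast⟩
    exact ⟨⟨0, h0⟩, Fin.last m, hlast⟩

lemma lt_lo_and_hi_lt_of_not_intersects (hf : IsFestoonSeq f) {z : Link n}
    (hz : ∀ i, ¬ Intersects (f i) z) {v : Fin n} (hv : z.Incident v)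
    (hvf : v ∈ Set.Icc (f 0).lo (f (Fin.last m)).hi) :
    (f 0).lo < z.lo ∧ z.hi < (f (Fin.last m)).hi := by
  obtain ⟨i, -, -, hi⟩ := hf.exists_mem_Icc (Fin.zero_le _) hvf
  obtain ⟨hlo, hhi⟩ := Link.lt_lo_and_hi_lt_of_not_intersects (hz i) hv hi
  exact ⟨(hf.strictMono_lo.monotone (Fin.zero_le i)).trans_lt hlo,
    hhi.trans_le (hf.strictMono_hi.monotone (Fin.le_last i))⟩

end IsFestoonSeq

theorem sandwiched_festoons_tangled_general {n : ℕ}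
    (X Y Z : Finset (Link (n + 3)))
    (hY : IsFestoon Y) (hZ : IsFestoon Z)
    (hXY : festoonIval X ⊆ festoonIval Y)
    (hYZ : festoonIval Y ⊆ festoonIval Z)
    (hXZ : Tangled X Z) :
    Tangled Y Z := by
  obtain ⟨q, g, hg, rfl⟩ := hY.exists_seq
  obtain ⟨m, h, hh, rfl⟩ := hZ.exists_seq
  obtain ⟨ℓ, hℓ, _, hfZ, hℓk⟩ := hXZ
  obtain ⟨k, -, rfl⟩ := Finset.mem_image.mp hfZ
  rw [hg.festoonIval_eq] at hXY hYZ
  rw [hh.festoonIval_eq] at hYZ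
  by_contra hYZ_untangled
  have hsep : ∀ j i, ¬ Intersects (g i) (h j) := fun j i hij =>
    hYZ_untangled ⟨g i, Finset.mem_image_of_mem g (Finset.mem_univ i),
      h j, Finset.mem_image_of_mem h (Finset.mem_univ j), hij⟩
  obtain ⟨v, hvk, hvℓ⟩ := ℓ.exists_incident_mem_Icc_of_intersects hℓk
  have hvY := hXY (Icc_subset_festoonIval hℓ hvℓ)
  have hk := hg.lt_lo_and_hi_lt_of_not_intersects (hsep k) hvk hvY
  have haZ := hYZ (Set.left_mem_Icc.mpr (hvY.1.trans hvY.2))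
  obtain ⟨j, -, hjk, hja⟩ := hh.exists_mem_Icc (Fin.zero_le k)
    ⟨haZ.1, hk.1.le.trans (h k).lo_lt_hi.le⟩
  have hj := hg.lt_lo_and_hi_lt_of_not_intersects (hsep j) (Or.inr rfl)
    ⟨hja.2, (hh.strictMono_hi.monotone hjk).trans hk.2.le⟩
  exact hja.1.not_gt hj.1

/-- for festoons `X ≼ Y ≼ Z` (nested festoon intervals), if
`X` and `Z` are tangled, then `Y` and `Z` are tangled. -/
theorem sandwiched_festoons_tangled {n : ℕ}
    (X Y Z : Finset (Link (n + 3)))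
    (hX : IsFestoon X) (hY : IsFestoon Y) (hZ : IsFestoon Z)
    (hXY : festoonIval X ⊆ festoonIval Y)
    (hYZ : festoonIval Y ⊆ festoonIval Z)
    (hXZ : Tangled X Z) :
    Tangled Y Z :=
  sandwiched_festoons_tangled_general X Y Z hY hZ hXY hYZ hXZ
end

section
/- Let (G, L, c, r, e_r) be a rooted WRAP instance and α a nonnegative integer. Let 𝒳' be a finite set of pairwise disjoint festoons whose festoon intervals {I_X : X ∈ 𝒳'} form a laminar family and satisfy r ∉ I_X for every X ∈ 𝒳' with I_X ≠ V. If every festoon X ∈ 𝒳' is tangled with at most α festoons in {Z ∈ 𝒳' \ {X} : X ≼ Z}, then the link set ⋃_{X ∈ 𝒳'} X is 4(α + 1)-thin. -/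
variable {n : ℕ}

/-!
The festoon intervals other than `V` avoid the root, so they are 2-cuts, and they form a laminar
family; extend it to a maximal laminar family `𝓛` of 2-cuts and fix `C ∈ 𝓛`. If a festoon `Z` has
a link crossing `C`, then `I_Z` meets `C` and leaves it, so laminarity forces `C ⊆ I_Z`. The
intervals of these festoons therefore form a chain; let `I_X` be the least one. Every other such
`Z` has a link with an endpoint in `C ⊆ I_X ⊆ I_Z`, and walking along `Z` from that link one meets
a link intersecting a link of `X`; so at most `α + 1` festoons cross `C`. Since non-consecutive
links of a festoon do not intersect, at most two links of a festoon pass over any edge of the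
path, and a link crossing the interval `C` passes over one of its two boundary edges: each
festoon contributes at most four links to `δ(C)`.
-/

namespace IsFestoonSeq

variable {p : ℕ} {g : Fin p → Link n}

lemma strictMono_lo_s16 (hg : IsFestoonSeq g) : StrictMono fun i => (g i).lo :=
  fun i j hij => (hg.1 i j hij).1

lemma strictMono_hi_s16 (hg : IsFestoonSeq g) : StrictMono fun i => (g i).hi :=
  fun i j hij => (hg.1 i j hij).2

lemma lo_le_hi_of_succ (hg : IsFestoonSeq g) {i j : Fin p} (hij : (i : ℕ) + 1 = j) :
    (g j).lo ≤ (g i).hi := by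
  have hlt := hg.1 i j (by rw [Fin.lt_def]; omega)
  have := hg.2.1 i j hij
  have := (g j).lo_lt_hi
  unfold Intersects Crossing at *
  omega

lemma exists_lo_lt_le_hi (hg : IsFestoonSeq g) {j m : Fin p} {w : Fin n}
    (hj : (g j).lo < w) (hm : w ≤ (g m).hi) : ∃ k, j ≤ k ∧ (g k).lo < w ∧ w ≤ (g k).hi := by
  classical
  set S := Finset.univ.filter fun i => (g i).lo < w
  have hjS : j ∈ S := by simp [S, hj]
  set k := S.max' ⟨j, hjS⟩
  refine ⟨k, S.le_max' j hjS, (Finset.mem_filter.1 (S.max'_mem _)).2, ?_⟩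
  by_contra! hwk
  have hkm : k < m := lt_of_not_ge fun hmk => (hm.trans (hg.strictMono_hi_s16.monotone hmk)).not_gt hwk
  -- the successor of the last link starting left of `w` would also start left of `w`
  have hsucc : (⟨k + 1, by omega⟩ : Fin p) ∈ S := by
    simpa [S] using (hg.lo_le_hi_of_succ (j := ⟨k + 1, by omega⟩) rfl).trans_lt hwk
  have := S.le_max' _ hsucc
  simp only [Fin.le_def] at this
  omega

lemma card_filter_covering_le_two (hg : IsFestoonSeq g) (w : ℕ) :
    (Finset.univ.filter fun i => ((g i).lo : ℕ) ≤ w ∧ w < (g i).hi).card ≤ 2 := by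
  set S := Finset.univ.filter fun i => ((g i).lo : ℕ) ≤ w ∧ w < (g i).hi
  have hclose : ∀ i ∈ S, ∀ j ∈ S, i < j → (j : ℕ) ≤ i + 1 := by
    intro i hi j hj hij
    by_contra! hfar
    apply hg.2.2 i j hfar
    have := hg.1 i j hij
    simp only [S, Finset.mem_filter, Finset.mem_univ, true_and] at hi hj
    unfold Intersects Crossing
    omega
  -- three distinct indices cannot be pairwise adjacent
  by_contra! h3
  obtain ⟨a, b, c, ha, hb, hc, hab, hac, hbc⟩ := Finset.two_lt_card_iff.1 h3
  have := hclose a ha b hb; have := hclose b hb a ha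
  have := hclose a ha c hc; have := hclose c hc a ha
  have := hclose b hb c hc; have := hclose c hc b hb
  omega

end IsFestoonSeq

lemma Link.lo_mem_festoonIval {X : Finset (Link n)} {ℓ : Link n} (hℓ : ℓ ∈ X) :
    ℓ.lo ∈ festoonIval X :=
  ⟨⟨ℓ, hℓ, le_rfl⟩, ⟨ℓ, hℓ, ℓ.lo_lt_hi.le⟩⟩

lemma Link.hi_mem_festoonIval {X : Finset (Link n)} {ℓ : Link n} (hℓ : ℓ ∈ X) :
    ℓ.hi ∈ festoonIval X :=
  ⟨⟨ℓ, hℓ, ℓ.lo_lt_hi.le⟩, ⟨ℓ, hℓ, le_rfl⟩⟩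

lemma Link.intersects_or_nested {ℓ ζ : Link n} {v : Fin n} (hv : ζ.Incident v)
    (hlo : ℓ.lo ≤ v) (hhi : v ≤ ℓ.hi) : Intersects ℓ ζ ∨ (ℓ.lo < ζ.lo ∧ ζ.hi < ℓ.hi) := by
  have := ζ.lo_lt_hi
  unfold Link.Incident at hv
  unfold Intersects Crossing
  omega

lemma festoonIval_eq_Icc {X : Finset (Link n)} (hX : X.Nonempty) :
    festoonIval X = Set.Icc (X.inf' hX Link.lo) (X.sup' hX Link.hi) := by
  ext w
  simp [festoonIval, Finset.inf'_le_iff, Finset.le_sup'_iff]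

lemma exists_isCut_coe_eq_festoonIval [NeZero n] {X : Finset (Link n)} (hX : X.Nonempty)
    (h0 : (0 : Fin n) ∉ festoonIval X) :
    ∃ C : Finset (Fin n), IsCut C ∧ (C : Set (Fin n)) = festoonIval X := by
  obtain ⟨ℓ, hℓ⟩ := id hX
  rw [festoonIval_eq_Icc hX, Set.mem_Icc, not_and, not_le] at h0
  refine ⟨Finset.Icc (X.inf' hX Link.lo) (X.sup' hX Link.hi), ⟨_, _, ?_, ?_, rfl⟩, ?_⟩
  · exact lt_of_not_ge fun h => (h0 h).not_ge (Fin.zero_le _)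
  · exact (X.inf'_le Link.lo hℓ).trans (ℓ.lo_lt_hi.le.trans (X.le_sup' Link.hi hℓ))
  · rw [festoonIval_eq_Icc hX, Finset.coe_Icc]

namespace IsFestoon

variable {X Z : Finset (Link n)}

lemma nonempty (hX : IsFestoon X) : X.Nonempty := by
  obtain ⟨p, hp, f, -, rfl⟩ := hX
  exact ⟨f ⟨0, hp⟩, Finset.mem_image_of_mem f (Finset.mem_univ _)⟩

lemma exists_mem_lo_le_hi (hX : IsFestoon X) {v : Fin n} (hv : v ∈ festoonIval X) :
    ∃ ℓ ∈ X, ℓ.lo ≤ v ∧ v ≤ ℓ.hi := by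
  obtain ⟨⟨ℓ₀, hℓ₀, hlo⟩, ⟨ℓ₁, hℓ₁, hhi⟩⟩ := hv
  rcases hlo.eq_or_lt with rfl | hlo
  · exact ⟨ℓ₀, hℓ₀, le_rfl, ℓ₀.lo_lt_hi.le⟩
  obtain ⟨p, -, f, hf, rfl⟩ := hX
  obtain ⟨i, -, rfl⟩ := Finset.mem_image.1 hℓ₀
  obtain ⟨m, -, rfl⟩ := Finset.mem_image.1 hℓ₁
  obtain ⟨k, -, hk⟩ := hf.exists_lo_lt_le_hi hlo hhi
  exact ⟨f k, Finset.mem_image_of_mem f (Finset.mem_univ k), hk.1.le, hk.2⟩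

lemma tangled_of_festoonIval_subset (hX : IsFestoon X) (hZ : IsFestoon Z)
    (hsub : festoonIval X ⊆ festoonIval Z) {ζ : Link n} (hζ : ζ ∈ Z) {v : Fin n}
    (hv : ζ.Incident v) (hvX : v ∈ festoonIval X) : Tangled X Z := by
  obtain ⟨ℓ, hℓ, hlo, hhi⟩ := hX.exists_mem_lo_le_hi hvX
  refine ⟨ℓ, hℓ, ?_⟩
  rcases Link.intersects_or_nested hv hlo hhi with h | ⟨hlo', hhi'⟩
  · exact ⟨ζ, hζ, h⟩
  -- `ℓ` encloses `ζ`, so the first link of `Z` after `ζ` reaching `ℓ.hi` crosses `ℓ`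
  obtain ⟨q, -, g, hg, rfl⟩ := hZ
  obtain ⟨j, -, rfl⟩ := Finset.mem_image.1 hζ
  obtain ⟨-, ⟨_, hm, hhim⟩⟩ := hsub (Link.hi_mem_festoonIval hℓ)
  obtain ⟨m, -, rfl⟩ := Finset.mem_image.1 hm
  obtain ⟨k, hjk, hk⟩ := hg.exists_lo_lt_le_hi ((g j).lo_lt_hi.trans hhi') hhim
  have := hg.strictMono_lo_s16.monotone hjk
  refine ⟨g k, Finset.mem_image_of_mem g (Finset.mem_univ k), ?_⟩
  unfold Intersects Crossing
  omega

lemma card_filter_covering_le_two (hX : IsFestoon X) (w : ℕ) :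
    (X.filter fun ℓ => (ℓ.lo : ℕ) ≤ w ∧ w < ℓ.hi).card ≤ 2 := by
  obtain ⟨p, -, g, hg, rfl⟩ := hX
  rw [Finset.filter_image]
  exact Finset.card_image_le.trans (hg.card_filter_covering_le_two w)

lemma card_cutLinks_Icc_le_four (hX : IsFestoon X) (a b : Fin n) :
    (cutLinks X (Finset.Icc a b)).card ≤ 4 := by
  have hsub : cutLinks X (Finset.Icc a b) ⊆
      X.filter (fun ℓ => (ℓ.lo : ℕ) ≤ (a : ℕ) - 1 ∧ (a : ℕ) - 1 < ℓ.hi) ∪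
        X.filter (fun ℓ => (ℓ.lo : ℕ) ≤ b ∧ (b : ℕ) < ℓ.hi) := by
    intro ℓ hℓ
    have := ℓ.lo_lt_hi
    simp only [cutLinks, crossesCut, Finset.mem_filter, Finset.mem_union, Finset.mem_Icc] at hℓ ⊢
    obtain ⟨hℓX, hcross⟩ := hℓ
    simp only [hℓX, true_and]
    omega
  calc (cutLinks X (Finset.Icc a b)).card ≤ 2 + 2 :=
        (Finset.card_le_card hsub).trans ((Finset.card_union_le _ _).trans
          (add_le_add (hX.card_filter_covering_le_two _) (hX.card_filter_covering_le_two _)))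
    _ = 4 := rfl

end IsFestoon

lemma crossesCut.coe_subset {ℓ : Link n} {C : Finset (Fin n)} {I : Set (Fin n)}
    (h : crossesCut ℓ C) (hlo : ℓ.lo ∈ I) (hhi : ℓ.hi ∈ I)
    (hCI : ↑C ⊆ I ∨ I ⊆ ↑C ∨ Disjoint (↑C : Set (Fin n)) I) : ↑C ⊆ I := by
  rcases hCI with hCI | hIC | hdisj
  · exact hCI
  · rcases h with ⟨-, h⟩ | ⟨h, -⟩
    exacts [absurd (hIC hhi) h, absurd (hIC hlo) h]
  · rcases h with ⟨h, -⟩ | ⟨-, h⟩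
    exacts [absurd hlo (Set.disjoint_left.1 hdisj h), absurd hhi (Set.disjoint_left.1 hdisj h)]

lemma crossesCut.exists_incident_mem {ℓ : Link n} {C : Finset (Fin n)} (h : crossesCut ℓ C) :
    ∃ v ∈ C, ℓ.Incident v := by
  rcases h with ⟨h, -⟩ | ⟨-, h⟩
  exacts [⟨_, h, Or.inl rfl⟩, ⟨_, h, Or.inr rfl⟩]

lemma exists_maxLaminarCuts_superset [NeZero n] {ℱ : Set (Finset (Fin n))}
    (hcut : ∀ C ∈ ℱ, IsCut C) (hlam : Laminar ℱ) : ∃ 𝓛, ℱ ⊆ 𝓛 ∧ MaxLaminarCuts 𝓛 := by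
  obtain ⟨𝓛, ⟨hℱ𝓛, h𝓛cut, h𝓛lam⟩, hmax⟩ :=
    (Set.toFinite {𝓜 : Set (Finset (Fin n)) | ℱ ⊆ 𝓜 ∧ (∀ C ∈ 𝓜, IsCut C) ∧ Laminar 𝓜}
      ).exists_maximal ⟨ℱ, subset_rfl, hcut, hlam⟩
  refine ⟨𝓛, hℱ𝓛, h𝓛cut, h𝓛lam, fun C hC hC𝓛 hins => hC𝓛 ?_⟩
  have hins𝓛 : insert C 𝓛 ⊆ 𝓛 :=
    hmax ⟨hℱ𝓛.trans (Set.subset_insert C 𝓛), Set.forall_mem_insert.2 ⟨hC, h𝓛cut⟩, hins⟩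
      (Set.subset_insert C 𝓛)
  exact hins𝓛 (Set.mem_insert C 𝓛)

lemma exists_forall_subset_of_nested {ι α : Type*} {T : Finset ι} (f : ι → Set α)
    (hT : T.Nonempty) (hnest : ∀ Z ∈ T, ∀ Z' ∈ T, f Z ⊆ f Z' ∨ f Z' ⊆ f Z) :
    ∃ X ∈ T, ∀ Z ∈ T, f X ⊆ f Z := by
  classical
  obtain ⟨_, hmin⟩ := Finset.exists_minimal (hT.image f)
  obtain ⟨X, hX, rfl⟩ := Finset.mem_image.1 hmin.prop
  refine ⟨X, hX, fun Z hZ => (hnest X hX Z hZ).elim id fun hZX => ?_⟩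
  exact hmin.le_of_le (Finset.mem_image_of_mem f hZ) hZX

def crossingFestoons (𝒳 : Finset (Finset (Link n))) (C : Finset (Fin n)) :
    Finset (Finset (Link n)) :=
  𝒳.filter fun Z => (cutLinks Z C).Nonempty

lemma cutLinks_biUnion_subset (𝒳 : Finset (Finset (Link n))) (C : Finset (Fin n)) :
    cutLinks (𝒳.biUnion id) C ⊆ (crossingFestoons 𝒳 C).biUnion (cutLinks · C) := by
  intro ℓ hℓ
  obtain ⟨hℓ𝒳, hcross⟩ := Finset.mem_filter.1 hℓ
  obtain ⟨Z, hZ, hℓZ⟩ := Finset.mem_biUnion.1 hℓ𝒳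
  have hℓC : ℓ ∈ cutLinks Z C := Finset.mem_filter.2 ⟨hℓZ, hcross⟩
  exact Finset.mem_biUnion.2 ⟨Z, Finset.mem_filter.2 ⟨hZ, ℓ, hℓC⟩, hℓC⟩

lemma card_crossingFestoons_le {α : ℕ} {𝒳 : Finset (Finset (Link n))} {C : Finset (Fin n)}
    (hfest : ∀ X ∈ 𝒳, IsFestoon X)
    (hlam : ∀ X ∈ 𝒳, ∀ Y ∈ 𝒳,
      festoonIval X ⊆ festoonIval Y ∨ festoonIval Y ⊆ festoonIval X ∨
        festoonIval X ∩ festoonIval Y = ∅)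
    (htangled : ∀ X ∈ 𝒳,
      Set.ncard {Z | Z ∈ 𝒳 ∧ Z ≠ X ∧ festoonIval X ⊆ festoonIval Z ∧ Tangled X Z} ≤ α)
    (hC : ∀ Z ∈ 𝒳, ↑C ⊆ festoonIval Z ∨ festoonIval Z ⊆ ↑C ∨
      Disjoint (↑C : Set (Fin n)) (festoonIval Z)) :
    (crossingFestoons 𝒳 C).card ≤ α + 1 := by
  set T := crossingFestoons 𝒳 C
  have hcross : ∀ Z ∈ T, Z ∈ 𝒳 ∧ ∃ ζ ∈ Z, crossesCut ζ C := by
    intro Z hZ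
    obtain ⟨hZ𝒳, ζ, hζ⟩ := Finset.mem_filter.1 hZ
    exact ⟨hZ𝒳, ζ, Finset.mem_filter.1 hζ⟩
  have hCZ : ∀ Z ∈ T, ↑C ⊆ festoonIval Z := by
    intro Z hZ
    obtain ⟨hZ𝒳, ζ, hζ, hζC⟩ := hcross Z hZ
    exact hζC.coe_subset (Link.lo_mem_festoonIval hζ) (Link.hi_mem_festoonIval hζ) (hC Z hZ𝒳)
  rcases T.eq_empty_or_nonempty with hT | ⟨Z₀, hZ₀⟩
  · simp [hT]
  obtain ⟨-, ζ₀, -, hζ₀⟩ := hcross Z₀ hZ₀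
  obtain ⟨c, hc, -⟩ := hζ₀.exists_incident_mem
  have hnest : ∀ Z ∈ T, ∀ Z' ∈ T,
      festoonIval Z ⊆ festoonIval Z' ∨ festoonIval Z' ⊆ festoonIval Z := by
    intro Z hZ Z' hZ'
    rcases hlam Z (hcross Z hZ).1 Z' (hcross Z' hZ').1 with h | h | h
    · exact Or.inl h
    · exact Or.inr h
    · exact (Set.notMem_empty c (h ▸ ⟨hCZ Z hZ hc, hCZ Z' hZ' hc⟩)).elim
  obtain ⟨X, hXT, hXmin⟩ := exists_forall_subset_of_nested festoonIval ⟨Z₀, hZ₀⟩ hnest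
  have hX𝒳 := (hcross X hXT).1
  have hsub : (↑(T.erase X) : Set (Finset (Link n))) ⊆
      {Z | Z ∈ 𝒳 ∧ Z ≠ X ∧ festoonIval X ⊆ festoonIval Z ∧ Tangled X Z} := by
    intro Z hZ
    obtain ⟨hZX, hZT⟩ := Finset.mem_erase.1 hZ
    obtain ⟨hZ𝒳, ζ, hζ, hζC⟩ := hcross Z hZT
    obtain ⟨v, hvC, hv⟩ := hζC.exists_incident_mem
    exact ⟨hZ𝒳, hZX, hXmin Z hZT, (hfest X hX𝒳).tangled_of_festoonIval_subset (hfest Z hZ𝒳)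
      (hXmin Z hZT) hζ hv (hCZ X hXT hvC)⟩
  calc T.card = (T.erase X).card + 1 := (Finset.card_erase_add_one hXT).symm
    _ ≤ α + 1 := by
      rw [← Set.ncard_coe_finset]
      gcongr
      exact (Set.ncard_le_ncard hsub (𝒳.finite_toSet.subset fun Z hZ => hZ.1)).trans
        (htangled X hX𝒳)

theorem few_tangled_imply_thin_general {n : ℕ} (α : ℕ)
    (𝒳 : Finset (Finset (Link (n + 3))))
    (hfest : ∀ X ∈ 𝒳, IsFestoon X)
    (hlam : ∀ X ∈ 𝒳, ∀ Y ∈ 𝒳,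
      festoonIval X ⊆ festoonIval Y ∨ festoonIval Y ⊆ festoonIval X ∨
        festoonIval X ∩ festoonIval Y = ∅)
    (hroot : ∀ X ∈ 𝒳, festoonIval X ≠ Set.univ →
      (0 : Fin (n + 3)) ∉ festoonIval X)
    (htangled : ∀ X ∈ 𝒳,
      Set.ncard {Z : Finset (Link (n + 3)) |
        Z ∈ 𝒳 ∧ Z ≠ X ∧ festoonIval X ⊆ festoonIval Z ∧ Tangled X Z} ≤ α) :
    IsThin (4 * (α + 1)) (𝒳.biUnion id) := by
  set ℱ : Set (Finset (Fin (n + 3))) :=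
    {C | IsCut C ∧ ∃ X ∈ 𝒳, (C : Set (Fin (n + 3))) = festoonIval X}
  have hℱ : Laminar ℱ := by
    rintro A ⟨-, X, hX, hAX⟩ B ⟨-, Y, hY, hBY⟩
    simpa only [← Finset.coe_subset, ← Finset.disjoint_coe, Set.disjoint_iff_inter_eq_empty,
      hAX, hBY] using hlam X hX Y hY
  obtain ⟨𝓛, hℱ𝓛, h𝓛⟩ := exists_maxLaminarCuts_superset (fun C hC => hC.1) hℱ
  refine ⟨𝓛, h𝓛, fun C hC => ?_⟩
  have hCI : ∀ Z ∈ 𝒳, ↑C ⊆ festoonIval Z ∨ festoonIval Z ⊆ ↑C ∨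
      Disjoint (↑C : Set (Fin (n + 3))) (festoonIval Z) := by
    intro Z hZ
    by_cases hu : festoonIval Z = Set.univ
    · exact Or.inl (hu ▸ Set.subset_univ _)
    obtain ⟨D, hD, hDZ⟩ :=
      exists_isCut_coe_eq_festoonIval (hfest Z hZ).nonempty (hroot Z hZ hu)
    rw [← hDZ, Finset.coe_subset, Finset.coe_subset, Finset.disjoint_coe]
    exact h𝓛.2.1 C hC D (hℱ𝓛 ⟨hD, Z, hZ, hDZ⟩)
  obtain ⟨a, b, -, -, rfl⟩ := h𝓛.1 C hC
  calc (cutLinks (𝒳.biUnion id) (Finset.Icc a b)).card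
      ≤ (crossingFestoons 𝒳 (Finset.Icc a b)).card * 4 :=
        (Finset.card_le_card (cutLinks_biUnion_subset 𝒳 _)).trans
          (Finset.card_biUnion_le_card_mul _ _ _ fun Z hZ =>
            (hfest Z (Finset.mem_filter.1 hZ).1).card_cutLinks_Icc_le_four a b)
    _ ≤ (α + 1) * 4 := Nat.mul_le_mul_right 4 (card_crossingFestoons_le hfest hlam htangled hCI)
    _ = 4 * (α + 1) := Nat.mul_comm _ _

/-- let `𝒳` be a finite set of pairwise disjoint festoons
with laminar festoon intervals, none of which contains the root unless it is
all of `V`.  If every festoon `X ∈ 𝒳` is tangled with at most `α` festoons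
`Z ∈ 𝒳 \ {X}` with `X ≼ Z`, then `⋃_{X ∈ 𝒳} X` is `4(α+1)`-thin. -/
theorem few_tangled_imply_thin {n : ℕ} (α : ℕ)
    (𝒳 : Finset (Finset (Link (n + 3))))
    (hfest : ∀ X ∈ 𝒳, IsFestoon X)
    (hdisj : ∀ X ∈ 𝒳, ∀ Y ∈ 𝒳, X ≠ Y → Disjoint X Y)
    (hlam : ∀ X ∈ 𝒳, ∀ Y ∈ 𝒳,
      festoonIval X ⊆ festoonIval Y ∨ festoonIval Y ⊆ festoonIval X ∨
        festoonIval X ∩ festoonIval Y = ∅)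
    (hroot : ∀ X ∈ 𝒳, festoonIval X ≠ Set.univ →
      (0 : Fin (n + 3)) ∉ festoonIval X)
    (htangled : ∀ X ∈ 𝒳,
      Set.ncard {Z : Finset (Link (n + 3)) |
        Z ∈ 𝒳 ∧ Z ≠ X ∧ festoonIval X ⊆ festoonIval Z ∧ Tangled X Z} ≤ α) :
    IsThin (4 * (α + 1)) (𝒳.biUnion id) :=
  few_tangled_imply_thin_general α 𝒳 hfest hlam hroot htangled
end

section
/- Let (G, L, c, r, e_r) be a rooted WRAP instance that admits a WRAP solution, and let OPT ⊆ L be a WRAP solution of minimum cost. Then there exists a non-shortenable directed WRAP solution F⃗ ⊆ shadows(L) with c(F⃗) ≤ 2 · c(OPT), where the cost of a directed link ℓ⃗ ∈ shadows(L) is c(ℓ⃗) := min{c(ℓ) : ℓ ∈ L and ℓ⃗ is a shadow of ℓ} and c(F⃗) := Σ_{ℓ⃗ ∈ F⃗} c(ℓ⃗). -/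
variable {n : ℕ}

/-! Orient every link of `OPT` both ways: this is a directed solution of cost at most
`2 · c(OPT)` made of shadows. Among all directed solutions made of shadows and no more
expensive than that one, take one of minimum total length. Deleting a link, or replacing
it by a strict shortening (again a shadow, of no larger cost), strictly decreases the
total length, so by minimality neither can preserve feasibility. -/

theorem Finset.sum_insert_erase_add_le {α M : Type*} [DecidableEq α] [AddCommMonoid M]
    [PartialOrder M] [IsOrderedAddMonoid M] {s : Finset α} {a b : α} (f : α → M)
    (hb : b ∈ s) (ha : 0 ≤ f a) :
    ∑ x ∈ insert a (s.erase b), f x + f b ≤ ∑ x ∈ s, f x + f a := by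
  rw [← Finset.sum_erase_add s f hb, add_right_comm]
  gcongr
  by_cases hmem : a ∈ s.erase b
  · rw [Finset.insert_eq_of_mem hmem]
    exact le_add_of_nonneg_right ha
  · rw [Finset.sum_insert hmem, add_comm]

/-- The number of ring edges between the endpoints, along the path avoiding `e_r`. -/
def DLink.length (d : DLink n) : ℕ := (d.head : ℕ) - d.tail + (d.tail - d.head)

theorem DLink.length_pos (d : DLink n) : 0 < d.length := by
  have := Fin.val_ne_of_ne d.ne
  simp only [DLink.length]
  omega

theorem IsShortening.length_lt {d' d : DLink n} (h : IsShortening d' d) (hne : d' ≠ d) :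
    d'.length < d.length := by
  obtain ⟨hhead, hmin, hmax⟩ := h
  have htail : (d'.tail : ℕ) ≠ d.tail := fun ht =>
    hne (by cases d'; cases d; simp_all [Fin.val_inj])
  have hne' : (d'.tail : ℕ) ≠ d'.head := Fin.val_ne_of_ne d'.ne
  rw [Fin.le_def, Fin.coe_min] at hmin
  rw [Fin.le_def, Fin.coe_max] at hmax
  rw [← hhead] at hmin hmax
  simp only [DLink.length, ← hhead]
  omega

theorem IsShadow.of_isShortening {d' d : DLink n} {ℓ : Link n} (hd : IsShadow d ℓ)
    (h : IsShortening d' d) : IsShadow d' ℓ := by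
  obtain ⟨hhead, hlo, hhi⟩ := hd
  obtain ⟨hhead', hmin, hmax⟩ := h
  have hlo' : ℓ.lo ≤ d.head := by rcases hhead with h | h <;> simp [h, ℓ.lo_lt_hi.le]
  have hhi' : d.head ≤ ℓ.hi := by rcases hhead with h | h <;> simp [h, ℓ.lo_lt_hi.le]
  exact ⟨hhead' ▸ hhead, (le_min hlo hlo').trans hmin, hmax.trans (max_le hhi hhi')⟩

def Link.rightward (ℓ : Link n) : DLink n := ⟨ℓ.lo, ℓ.hi, ℓ.lo_lt_hi.ne⟩

def Link.leftward (ℓ : Link n) : DLink n := ⟨ℓ.hi, ℓ.lo, ℓ.lo_lt_hi.ne'⟩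

theorem Link.isShadow_rightward (ℓ : Link n) : IsShadow ℓ.rightward ℓ :=
  ⟨Or.inr rfl, le_rfl, ℓ.lo_lt_hi.le⟩

theorem Link.isShadow_leftward (ℓ : Link n) : IsShadow ℓ.leftward ℓ :=
  ⟨Or.inl rfl, ℓ.lo_lt_hi.le, le_rfl⟩

theorem IsSolution.isDirSolution_orientations [NeZero n] {S : Finset (Link n)}
    (hS : IsSolution S) : IsDirSolution (S.image Link.rightward ∪ S.image Link.leftward) := by
  intro C hC
  obtain ⟨ℓ, hℓ⟩ := hS C hC
  rw [cutLinks, Finset.mem_filter] at hℓ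
  obtain ⟨hℓS, ⟨hlo, hhi⟩ | ⟨hlo, hhi⟩⟩ := hℓ
  · exact ⟨ℓ.leftward, Finset.mem_union_right _ (Finset.mem_image_of_mem _ hℓS), hhi, hlo⟩
  · exact ⟨ℓ.rightward, Finset.mem_union_left _ (Finset.mem_image_of_mem _ hℓS), hlo, hhi⟩

section Cost

variable {L : Finset (Link n)} {c : Link n → ℝ}

/-- `c(d) = min {c(ℓ) : ℓ ∈ L, d is a shadow of ℓ}`; it is `0` (the `sInf ∅` junk value)
when `d` is no shadow of `L`. -/
noncomputable def dcost (L : Finset (Link n)) (c : Link n → ℝ) (d : DLink n) : ℝ :=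
  sInf {x : ℝ | ∃ ℓ ∈ L, IsShadow d ℓ ∧ c ℓ = x}

theorem dcost_nonneg (hc : ∀ ℓ ∈ L, 0 ≤ c ℓ) (d : DLink n) : 0 ≤ dcost L c d :=
  Real.sInf_nonneg fun _ ⟨ℓ, hℓ, _, hx⟩ => hx ▸ hc ℓ hℓ

theorem bddBelow_shadowCosts (hc : ∀ ℓ ∈ L, 0 ≤ c ℓ) (d : DLink n) :
    BddBelow {x : ℝ | ∃ ℓ ∈ L, IsShadow d ℓ ∧ c ℓ = x} :=
  ⟨0, fun _ ⟨ℓ, hℓ, _, hx⟩ => hx ▸ hc ℓ hℓ⟩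

theorem dcost_le_of_isShadow (hc : ∀ ℓ ∈ L, 0 ≤ c ℓ) {d : DLink n} {ℓ : Link n}
    (hℓ : ℓ ∈ L) (hd : IsShadow d ℓ) : dcost L c d ≤ c ℓ :=
  csInf_le (bddBelow_shadowCosts hc d) ⟨ℓ, hℓ, hd, rfl⟩

theorem IsShortening.dcost_le (hc : ∀ ℓ ∈ L, 0 ≤ c ℓ) {d' d : DLink n}
    (h : IsShortening d' d) (hd : ∃ ℓ ∈ L, IsShadow d ℓ) : dcost L c d' ≤ dcost L c d := by
  obtain ⟨ℓ, hℓ, hdℓ⟩ := hd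
  exact csInf_le_csInf (bddBelow_shadowCosts hc d') ⟨c ℓ, ℓ, hℓ, hdℓ, rfl⟩
    fun _ ⟨f, hf, hdf, hx⟩ => ⟨f, hf, hdf.of_isShortening h, hx⟩

theorem sum_dcost_image_le (hc : ∀ ℓ ∈ L, 0 ≤ c ℓ) {S : Finset (Link n)} (hS : S ⊆ L)
    {orient : Link n → DLink n} (horient : ∀ ℓ, IsShadow (orient ℓ) ℓ) :
    ∑ d ∈ S.image orient, dcost L c d ≤ ∑ ℓ ∈ S, c ℓ :=
  (Finset.sum_image_le_of_nonneg fun d _ => dcost_nonneg hc d).trans <|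
    Finset.sum_le_sum fun ℓ hℓ => dcost_le_of_isShadow hc (hS hℓ) (horient ℓ)

theorem exists_nonShortenable_le [NeZero n] (hc : ∀ ℓ ∈ L, 0 ≤ c ℓ) {F : Finset (DLink n)}
    (hF : ∀ d ∈ F, ∃ ℓ ∈ L, IsShadow d ℓ) (hsol : IsDirSolution F) :
    ∃ F' : Finset (DLink n), (∀ d ∈ F', ∃ ℓ ∈ L, IsShadow d ℓ) ∧ NonShortenable F' ∧
      ∑ d ∈ F', dcost L c d ≤ ∑ d ∈ F, dcost L c d := by
  set P : Finset (DLink n) → Prop := fun F' => (∀ d ∈ F', ∃ ℓ ∈ L, IsShadow d ℓ) ∧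
    IsDirSolution F' ∧ ∑ d ∈ F', dcost L c d ≤ ∑ d ∈ F, dcost L c d
  obtain ⟨F', ⟨hF', hsol', hcost'⟩, hmin⟩ :=
    exists_minimalFor_of_wellFoundedLT P (fun F' => ∑ d ∈ F', d.length) ⟨F, hF, hsol, le_rfl⟩
  have hlt : ∀ G, P G → ¬ ∑ d ∈ G, d.length < ∑ d ∈ F', d.length :=
    fun G hG hG' => hG'.not_ge (hmin hG hG'.le)
  refine ⟨F', hF', ⟨hsol', fun d hd hsol'' => ?_, fun d hd d' hd' hne hsol'' => ?_⟩, hcost'⟩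
  · have hlen := Finset.sum_erase_add F' DLink.length hd
    have hcost := Finset.sum_erase_add F' (dcost L c) hd
    refine hlt _ ⟨fun x hx => hF' x (Finset.mem_of_mem_erase hx), hsol'', ?_⟩
      (by linarith [d.length_pos])
    linarith [dcost_nonneg hc d]
  · have hlen := Finset.sum_insert_erase_add_le DLink.length hd (Nat.zero_le d'.length)
    have hcost := Finset.sum_insert_erase_add_le (dcost L c) hd (dcost_nonneg hc d')
    have hshadow : ∀ x ∈ insert d' (F'.erase d), ∃ ℓ ∈ L, IsShadow x ℓ := by
      intro x hx
      rcases Finset.mem_insert.1 hx with rfl | hx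
      · obtain ⟨ℓ, hℓ, hdℓ⟩ := hF' d hd
        exact ⟨ℓ, hℓ, hdℓ.of_isShortening hd'⟩
      · exact hF' x (Finset.mem_of_mem_erase hx)
    refine hlt _ ⟨hshadow, hsol'', ?_⟩ (by linarith [hd'.length_lt hne])
    linarith [hd'.dcost_le hc (hF' d hd)]

end Cost

theorem cheap_nonshortenable_directed_solution_general {n : ℕ}
    (L : Finset (Link (n + 3))) (c : Link (n + 3) → ℝ)
    (hc : ∀ ℓ ∈ L, 0 ≤ c ℓ)
    (OPT : Finset (Link (n + 3))) (hOPTL : OPT ⊆ L) (hOPT : IsSolution OPT) :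
    ∃ F : Finset (DLink (n + 3)),
      (∀ d ∈ F, ∃ ℓ ∈ L, IsShadow d ℓ) ∧ NonShortenable F ∧
      ∑ d ∈ F, sInf {x : ℝ | ∃ ℓ ∈ L, IsShadow d ℓ ∧ c ℓ = x} ≤
        2 * ∑ ℓ ∈ OPT, c ℓ := by
  set R := OPT.image Link.rightward
  set B := OPT.image Link.leftward
  have hshadow : ∀ d ∈ R ∪ B, ∃ ℓ ∈ L, IsShadow d ℓ := by
    simp only [R, B, Finset.mem_union, Finset.mem_image]
    rintro d (⟨ℓ, hℓ, rfl⟩ | ⟨ℓ, hℓ, rfl⟩)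
    exacts [⟨ℓ, hOPTL hℓ, ℓ.isShadow_rightward⟩, ⟨ℓ, hOPTL hℓ, ℓ.isShadow_leftward⟩]
  obtain ⟨F, hF, hns, hcost⟩ :=
    exists_nonShortenable_le hc hshadow hOPT.isDirSolution_orientations
  refine ⟨F, hF, hns, hcost.trans ?_⟩
  have hunion := Finset.sum_union_inter (s₁ := R) (s₂ := B) (f := dcost L c)
  have hinter := Finset.sum_nonneg fun d (_ : d ∈ R ∩ B) => dcost_nonneg hc d
  linarith [sum_dcost_image_le hc hOPTL Link.isShadow_rightward,
    sum_dcost_image_le hc hOPTL Link.isShadow_leftward]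

/-- if the rooted WRAP instance admits a solution and `OPT`
is a minimum-cost WRAP solution, then there is a non-shortenable directed WRAP
solution `F ⊆ shadows(L)` with `c(F) ≤ 2 · c(OPT)`, where the cost of a
directed link `d ∈ shadows(L)` is `min {c(ℓ) : ℓ ∈ L, d is a shadow of ℓ}`. -/
theorem cheap_nonshortenable_directed_solution {n : ℕ}
    (L : Finset (Link (n + 3))) (c : Link (n + 3) → ℝ)
    (hc : ∀ ℓ ∈ L, 0 ≤ c ℓ)
    (OPT : Finset (Link (n + 3))) (hOPTL : OPT ⊆ L) (hOPT : IsSolution OPT)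
    (hmin : ∀ S : Finset (Link (n + 3)), S ⊆ L → IsSolution S →
      ∑ ℓ ∈ OPT, c ℓ ≤ ∑ ℓ ∈ S, c ℓ) :
    ∃ F : Finset (DLink (n + 3)),
      (∀ d ∈ F, ∃ ℓ ∈ L, IsShadow d ℓ) ∧ NonShortenable F ∧
      ∑ d ∈ F, sInf {x : ℝ | ∃ ℓ ∈ L, IsShadow d ℓ ∧ c ℓ = x} ≤
        2 * ∑ ℓ ∈ OPT, c ℓ :=
  cheap_nonshortenable_directed_solution_general L c hc OPT hOPTL hOPT
end
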